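/- arXiv:2210.04444 — 5 statements merged into one kernel-verified Lean document; each statement's English description precedes it below -/
import Mathlib

section
/- Let 1 < q < ∞, let 0 < ρ₁ < 1 < ρ₂, and let ω be a weight on ℤ satisfying ∑_{n∈ℤ} ω(n)^{-q} < ∞ and (ω^{-q} ⋆ ω^{-q})(n) ≤ ω(n)^{-q} for all n ∈ ℤ. If ∑_{n∈ℤ} x^{qn} ω(n)^{-q} < ∞ for every x ∈ (ρ₁, ρ₂), then ∑_{n∈ℤ} x^{qn} ω(n)^{-q} ≤ 1 for every x ∈ [ρ₁, ρ₂]. -/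
open scoped BigOperators

/-- A weight on `ℤ`: `ω : ℤ → [1,∞)` with `ω(m+n) ≤ ω(m)ω(n)`. -/
def IsWeight (ω : ℤ → ℝ) : Prop :=
  (∀ n, 1 ≤ ω n) ∧ ∀ m n, ω (m + n) ≤ ω m * ω n

/-- `ρ₁(ω) = sup{ω(-n)^{-1/n} : n ∈ ℕ, n ≥ 1}`. -/
noncomputable def rho1 (ω : ℤ → ℝ) : ℝ :=
  sSup {x : ℝ | ∃ n : ℕ, 0 < n ∧ x = ω (-(n : ℤ)) ^ (-(1 : ℝ) / (n : ℝ))}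

/-- `ρ₂(ω) = inf{ω(n)^{1/n} : n ∈ ℕ, n ≥ 1}`. -/
noncomputable def rho2 (ω : ℤ → ℝ) : ℝ :=
  sInf {x : ℝ | ∃ n : ℕ, 0 < n ∧ x = ω (n : ℤ) ^ ((1 : ℝ) / (n : ℝ))}

/-- A weight is admissible if `ρ₁(ω) = ρ₂(ω) = 1`. -/
def IsAdmissible (ω : ℤ → ℝ) : Prop := rho1 ω = 1 ∧ rho2 ω = 1


/-!
For `x` in the open interval put `u n = x ^ (q n) ω(n) ^ (-q)`. Since `n ↦ x ^ (q n)` is a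
character, the hypothesis `ω^{-q} ⋆ ω^{-q} ≤ ω^{-q}` passes to `u ⋆ u ≤ u`, and summing over `n`
gives `(∑ u)² ≤ ∑ u`, so `∑ u ≤ 1`. At the endpoints every finite partial sum is a limit of
partial sums at interior points, hence is at most `1` as well.
-/

open Topology
open scoped ENNReal

section Convolution

variable {G : Type*} [AddCommGroup G]

theorem ENNReal.tsum_mul_tsum_eq_tsum_tsum_mul_sub (u v : G → ℝ≥0∞) :
    (∑' n, u n) * (∑' n, v n) = ∑' n, ∑' k, u k * v (n - k) := by
  calc (∑' n, u n) * (∑' n, v n) = ∑' k, u k * ∑' n, v (n - k) := by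
        rw [← ENNReal.tsum_mul_right]
        exact tsum_congr fun k => congrArg (u k * ·) ((Equiv.subRight k).tsum_eq v).symm
    _ = ∑' n, ∑' k, u k * v (n - k) := by
        simp_rw [← ENNReal.tsum_mul_left]
        exact ENNReal.tsum_comm

theorem ENNReal.tsum_le_one_of_tsum_mul_sub_le {u : G → ℝ≥0∞} (hu : ∑' n, u n ≠ ∞)
    (h : ∀ n, ∑' k, u k * u (n - k) ≤ u n) : ∑' n, u n ≤ 1 := by
  have hsq : (∑' n, u n) * (∑' n, u n) ≤ 1 * ∑' n, u n := by
    rw [one_mul, ENNReal.tsum_mul_tsum_eq_tsum_tsum_mul_sub]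
    exact ENNReal.tsum_le_tsum h
  rcases eq_or_ne (∑' n, u n) 0 with h0 | h0
  · exact h0 ▸ zero_le_one
  · exact (ENNReal.mul_le_mul_iff_left h0 hu).mp hsq

theorem summable_mul_sub_of_nonneg {u : G → ℝ} (hu0 : 0 ≤ u) (hu : Summable u) (n : G) :
    Summable fun k => u k * u (n - k) :=
  (hu.mul_right (∑' m, u m)).of_nonneg_of_le (fun k => mul_nonneg (hu0 k) (hu0 _))
    fun k => mul_le_mul_of_nonneg_left (hu.le_tsum _ fun j _ => hu0 j) (hu0 k)

theorem tsum_le_one_of_tsum_mul_sub_le {u : G → ℝ} (hu0 : 0 ≤ u) (hu : Summable u)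
    (h : ∀ n, ∑' k, u k * u (n - k) ≤ u n) : ∑' n, u n ≤ 1 := by
  have hT := ENNReal.ofReal_tsum_of_nonneg hu0 hu
  rw [← ENNReal.ofReal_le_one, hT]
  refine ENNReal.tsum_le_one_of_tsum_mul_sub_le (hT ▸ ENNReal.ofReal_ne_top) fun n => ?_
  calc ∑' k, ENNReal.ofReal (u k) * ENNReal.ofReal (u (n - k))
      = ENNReal.ofReal (∑' k, u k * u (n - k)) := by
        rw [ENNReal.ofReal_tsum_of_nonneg (fun k => mul_nonneg (hu0 k) (hu0 _))
          (summable_mul_sub_of_nonneg hu0 hu n)]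
        simp_rw [ENNReal.ofReal_mul (hu0 _)]
    _ ≤ ENNReal.ofReal (u n) := ENNReal.ofReal_le_ofReal (h n)

theorem tsum_mul_sub_of_map_add_eq_mul {χ w : G → ℝ} (hχ : ∀ a b, χ (a + b) = χ a * χ b)
    (n : G) :
    ∑' k, χ k * w k * (χ (n - k) * w (n - k)) = χ n * ∑' k, w k * w (n - k) := by
  rw [← tsum_mul_left]
  refine tsum_congr fun k => ?_
  rw [← add_sub_cancel k n, hχ, add_sub_cancel]
  ring

theorem tsum_mul_le_one_of_map_add_eq_mul {χ w : G → ℝ} (hχ : ∀ a b, χ (a + b) = χ a * χ b)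
    (hχ0 : 0 ≤ χ) (hw0 : 0 ≤ w) (hconv : ∀ n, ∑' k, w k * w (n - k) ≤ w n)
    (hsum : Summable fun n => χ n * w n) : ∑' n, χ n * w n ≤ 1 :=
  tsum_le_one_of_tsum_mul_sub_le (fun n => mul_nonneg (hχ0 n) (hw0 n)) hsum fun n => by
    rw [tsum_mul_sub_of_map_add_eq_mul hχ]
    exact mul_le_mul_of_nonneg_left (hconv n) (hχ0 n)

end Convolution

theorem summable_and_tsum_le_of_mem_closure {α ι : Type*} [TopologicalSpace α]
    {F : α → ι → ℝ} {s : Set α} {x : α} {C : ℝ} (hx : x ∈ closure s)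
    (hF : ∀ i, ContinuousWithinAt (F · i) s x) (hF0 : ∀ y ∈ s, 0 ≤ F y)
    (hs : ∀ y ∈ s, Summable (F y) ∧ ∑' i, F y i ≤ C) :
    Summable (F x) ∧ ∑' i, F x i ≤ C := by
  have : (𝓝[s] x).NeBot := mem_closure_iff_nhdsWithin_neBot.mp hx
  have hFx0 : 0 ≤ F x := fun i =>
    ge_of_tendsto (hF i) (eventually_nhdsWithin_of_forall fun y hy => hF0 y hy i)
  have hpartial : ∀ t : Finset ι, ∑ i ∈ t, F x i ≤ C := fun t =>
    le_of_tendsto (tendsto_finsetSum t fun i _ => hF i) <|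
      eventually_nhdsWithin_of_forall fun y hy =>
        ((hs y hy).1.sum_le_tsum t fun i _ => hF0 y hy i).trans (hs y hy).2
  exact ⟨summable_of_sum_le hFx0 hpartial, Real.tsum_le_of_sum_le hFx0 hpartial⟩

theorem stmt5_general (q : ℝ) (ρ₁ ρ₂ : ℝ) (h0 : 0 < ρ₁) (h1 : ρ₁ < 1) (h2 : 1 < ρ₂)
    (ω : ℤ → ℝ) (hω : IsWeight ω)
    (hconv : ∀ n : ℤ, (∑' k : ℤ, ω k ^ (-q) * ω (n - k) ^ (-q)) ≤ ω n ^ (-q))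
    (hfin : ∀ x ∈ Set.Ioo ρ₁ ρ₂, Summable fun n : ℤ => x ^ (q * (n : ℝ)) * ω n ^ (-q)) :
    ∀ x ∈ Set.Icc ρ₁ ρ₂,
      (Summable fun n : ℤ => x ^ (q * (n : ℝ)) * ω n ^ (-q)) ∧
      (∑' n : ℤ, x ^ (q * (n : ℝ)) * ω n ^ (-q)) ≤ 1 := by
  have hω0 (n : ℤ) : 0 ≤ ω n ^ (-q) := Real.rpow_nonneg (zero_le_one.trans (hω.1 n)) _
  have hint : ∀ y ∈ Set.Ioo ρ₁ ρ₂, (Summable fun n : ℤ => y ^ (q * (n : ℝ)) * ω n ^ (-q)) ∧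
      (∑' n : ℤ, y ^ (q * (n : ℝ)) * ω n ^ (-q)) ≤ 1 := by
    intro y hy
    have hy0 : 0 < y := h0.trans hy.1
    refine ⟨hfin y hy, tsum_mul_le_one_of_map_add_eq_mul (fun a b => ?_)
      (fun n => Real.rpow_nonneg hy0.le _) hω0 hconv (hfin y hy)⟩
    rw [Int.cast_add, mul_add, Real.rpow_add hy0]
  intro x hx
  have hx0 : 0 < x := h0.trans_le hx.1
  refine summable_and_tsum_le_of_mem_closure (closure_Ioo (h1.trans h2).ne ▸ hx)
    (fun n => ?_) (fun y hy n => ?_) hint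
  · exact ((Real.continuousAt_rpow_const x _ (Or.inl hx0.ne')).mul
      continuousAt_const).continuousWithinAt
  · exact mul_nonneg (Real.rpow_nonneg (h0.trans hy.1).le _) (hω0 n)

/-- **Lemma 3.1.** Let `1 < q < ∞`, `0 < ρ₁ < 1 < ρ₂`, and let `ω` be a weight on `ℤ` with
`∑ ω(n)^{-q} < ∞` and `ω^{-q} ⋆ ω^{-q} ≤ ω^{-q}`.  If `∑_{n∈ℤ} x^{qn} ω(n)^{-q} < ∞` for
every `x ∈ (ρ₁, ρ₂)`, then `∑_{n∈ℤ} x^{qn} ω(n)^{-q} ≤ 1` for every `x ∈ [ρ₁, ρ₂]`. -/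
theorem stmt5 (q : ℝ) (hq : 1 < q) (ρ₁ ρ₂ : ℝ) (h0 : 0 < ρ₁) (h1 : ρ₁ < 1) (h2 : 1 < ρ₂)
    (ω : ℤ → ℝ) (hω : IsWeight ω)
    (hsum : Summable fun n : ℤ => ω n ^ (-q))
    (hconv : ∀ n : ℤ, (∑' k : ℤ, ω k ^ (-q) * ω (n - k) ^ (-q)) ≤ ω n ^ (-q))
    (hfin : ∀ x ∈ Set.Ioo ρ₁ ρ₂, Summable fun n : ℤ => x ^ (q * (n : ℝ)) * ω n ^ (-q)) :
    ∀ x ∈ Set.Icc ρ₁ ρ₂,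
      (Summable fun n : ℤ => x ^ (q * (n : ℝ)) * ω n ^ (-q)) ∧
      (∑' n : ℤ, x ^ (q * (n : ℝ)) * ω n ^ (-q)) ≤ 1 :=
  stmt5_general q ρ₁ ρ₂ h0 h1 h2 ω hω hconv hfin
end

section
/- Let 1 < p < ∞ with conjugate index q, and let ω be a weight on ℤ satisfying ∑_{n∈ℤ} ω(n)^{-q} < ∞ and (ω^{-q} ⋆ ω^{-q})(n) ≤ ω(n)^{-q} for all n ∈ ℤ. If a : ℤ → ℂ satisfies ∑_{n∈ℤ} |a(n)|^p ω(n)^p < ∞ and z ∈ ℂ satisfies ρ₁(ω) ≤ |z| ≤ ρ₂(ω), then ∑_{n∈ℤ} |a(n)| |z|^n < ∞; in particular the series ∑_{n∈ℤ} a(n) z^n converges absolutely. -/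
open scoped BigOperators
open Filter Topology

lemma aux_summable (v : ℕ → ℝ) (h0 : ∀ n, 0 ≤ v n) (h1 : ∀ n, v n ≤ 1)
    (hd : ∀ N, (∑ n ∈ Finset.range N, v n) ^ 2 ≤ ∑ n ∈ Finset.range (2 * N), v n) :
    Summable v := by
  have hAle : ∀ M : ℕ, ∑ n ∈ Finset.range M, v n ≤ M := by
    intro M
    calc ∑ n ∈ Finset.range M, v n ≤ ∑ n ∈ Finset.range M, 1 :=
          Finset.sum_le_sum fun i _ => h1 i
      _ = M := by simp
  have key : ∀ (k M : ℕ), (∑ n ∈ Finset.range M, v n) ^ (2 ^ k) ≤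
      ∑ n ∈ Finset.range (2 ^ k * M), v n := by
    intro k
    induction k with
    | zero => intro M; simp
    | succ k ih =>
      intro M
      have h2 : ((∑ n ∈ Finset.range M, v n) ^ 2) ^ (2 ^ k) ≤
          ∑ n ∈ Finset.range (2 ^ k * (2 * M)), v n := by
        calc ((∑ n ∈ Finset.range M, v n) ^ 2) ^ (2 ^ k)
            ≤ (∑ n ∈ Finset.range (2 * M), v n) ^ (2 ^ k) :=
              pow_le_pow_left₀ (by positivity) (hd M) _
          _ ≤ ∑ n ∈ Finset.range (2 ^ k * (2 * M)), v n := ih (2 * M)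
      calc (∑ n ∈ Finset.range M, v n) ^ (2 ^ (k + 1))
          = ((∑ n ∈ Finset.range M, v n) ^ 2) ^ (2 ^ k) := by
            rw [← pow_mul]; ring_nf
        _ ≤ ∑ n ∈ Finset.range (2 ^ k * (2 * M)), v n := h2
        _ = ∑ n ∈ Finset.range (2 ^ (k + 1) * M), v n := by ring_nf
  have hA : ∀ N, ∑ n ∈ Finset.range N, v n ≤ 1 := by
    intro N
    by_contra hcon
    push_neg at hcon
    set A := ∑ n ∈ Finset.range N, v n with hAdef
    have hApos : (0:ℝ) < A := lt_trans one_pos hcon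
    have hlog : 0 < Real.log A := Real.log_pos hcon
    have hNpos : 0 < N := by
      rcases Nat.eq_zero_or_pos N with h | h
      · subst h; simp [hAdef] at hcon; linarith
      · exact h
    have hbound : ∀ k : ℕ, Real.log A ≤
        ((k : ℝ) * Real.log 2 + Real.log N) * ((2:ℝ) ^ k)⁻¹ := by
      intro k
      have h1' : A ^ (2 ^ k) ≤ ((2 ^ k * N : ℕ) : ℝ) := le_trans (key k N) (hAle _)
      have h2' : Real.log (A ^ (2 ^ k)) ≤ Real.log ((2 ^ k * N : ℕ) : ℝ) :=
        Real.log_le_log (by positivity) h1'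
      rw [Real.log_pow] at h2'
      have hcast : ((2 ^ k * N : ℕ) : ℝ) = (2:ℝ) ^ k * (N : ℝ) := by push_cast; ring
      rw [hcast, Real.log_mul (by positivity) (by positivity), Real.log_pow] at h2'
      have h2pos : (0:ℝ) < (2:ℝ) ^ k := by positivity
      rw [← div_eq_mul_inv, le_div_iff₀ h2pos]
      calc Real.log A * 2 ^ k = ((2 ^ k : ℕ) : ℝ) * Real.log A := by push_cast; ring
        _ ≤ (k : ℝ) * Real.log 2 + Real.log N := h2'
    have hlim : Tendsto (fun k : ℕ => ((k : ℝ) * Real.log 2 + Real.log N) * ((2:ℝ) ^ k)⁻¹)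
        atTop (𝓝 0) := by
      have t1 : Tendsto (fun k : ℕ => (k : ℝ) * (1/2 : ℝ) ^ k) atTop (𝓝 0) := by
        simpa using (summable_pow_mul_geometric_of_norm_lt_one 1
          (r := (1/2 : ℝ)) (by norm_num)).tendsto_atTop_zero
      have t2 : Tendsto (fun k : ℕ => (1/2 : ℝ) ^ k) atTop (𝓝 0) :=
        tendsto_pow_atTop_nhds_zero_of_lt_one (by norm_num) (by norm_num)
      have heq : ∀ k : ℕ, ((k : ℝ) * Real.log 2 + Real.log N) * ((2:ℝ) ^ k)⁻¹ =
          Real.log 2 * ((k : ℝ) * (1/2) ^ k) + Real.log N * (1/2) ^ k := by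
        intro k
        rw [one_div, inv_pow]
        ring
      have := ((t1.const_mul (Real.log 2)).add (t2.const_mul (Real.log N)))
      simp only [mul_zero, add_zero] at this
      exact Tendsto.congr (fun k => (heq k).symm) this
    have : Real.log A ≤ 0 := ge_of_tendsto' hlim hbound
    linarith
  exact summable_of_sum_range_le h0 hA

/-- **Proposition 3.2 (summability part).** Let `1 < p < ∞` with conjugate index `q`, and
`ω` a weight with `∑ ω(n)^{-q} < ∞` and `ω^{-q} ⋆ ω^{-q} ≤ ω^{-q}`.  If
`∑ |a(n)|^p ω(n)^p < ∞` and `ρ₁(ω) ≤ |z| ≤ ρ₂(ω)`, then `∑ |a(n)| |z|^n < ∞`; in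
particular `∑ a(n) z^n` converges absolutely. -/
theorem stmt6 (p q : ℝ) (hp : 1 < p) (hpq : 1 / p + 1 / q = 1)
    (ω : ℤ → ℝ) (hω : IsWeight ω)
    (hsum : Summable fun n : ℤ => ω n ^ (-q))
    (hconv : ∀ n : ℤ, (∑' k : ℤ, ω k ^ (-q) * ω (n - k) ^ (-q)) ≤ ω n ^ (-q))
    (a : ℤ → ℂ) (ha : Summable fun n : ℤ => ‖a n‖ ^ p * ω n ^ p)
    (z : ℂ) (hz1 : rho1 ω ≤ ‖z‖) (hz2 : ‖z‖ ≤ rho2 ω) :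
    (Summable fun n : ℤ => ‖a n‖ * ‖z‖ ^ n) ∧ Summable fun n : ℤ => a n * z ^ n := by
  classical
  obtain ⟨hω1, hωsub⟩ := hω
  have hωpos : ∀ n, 0 < ω n := fun n => lt_of_lt_of_le one_pos (hω1 n)
  have hp0 : 0 < p := lt_trans one_pos hp
  have hq0 : 0 < q := by
    by_contra h
    push_neg at h
    have h1 : 1 / p < 1 := by rw [div_lt_one hp0]; exact hp
    have h2 : 1 / q ≤ 0 := by
      rcases lt_or_eq_of_le h with h | h
      · exact le_of_lt (div_neg_of_pos_of_neg one_pos h)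
      · rw [h, div_zero]
    linarith
  have hcj : Real.HolderConjugate p q := Real.holderConjugate_iff.mpr ⟨hp, by rw [← one_div, ← one_div]; exact hpq⟩
  -- basic facts about σ := ω ^ (-q)
  have hσpos : ∀ n : ℤ, 0 < ω n ^ (-q) := fun n => Real.rpow_pos_of_pos (hωpos n) _
  have hσle1 : ∀ n : ℤ, ω n ^ (-q) ≤ 1 := fun n =>
    Real.rpow_le_one_of_one_le_of_nonpos (hω1 n) (by linarith)
  -- bounds from rho1, rho2
  have hSbdd : BddAbove {x : ℝ | ∃ n : ℕ, 0 < n ∧ x = ω (-(n : ℤ)) ^ (-(1 : ℝ) / (n : ℝ))} := by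
    refine ⟨1, fun x hx => ?_⟩
    obtain ⟨n, hn, rfl⟩ := hx
    exact Real.rpow_le_one_of_one_le_of_nonpos (hω1 _)
      (div_nonpos_of_nonpos_of_nonneg (by norm_num) (Nat.cast_nonneg n))
  have hrho1_ge : ω (-(1 : ℤ)) ^ (-(1 : ℝ) / ((1:ℕ) : ℝ)) ≤ rho1 ω :=
    le_csSup hSbdd ⟨1, one_pos, by norm_num⟩
  have hzpos : 0 < ‖z‖ :=
    lt_of_lt_of_le (Real.rpow_pos_of_pos (hωpos _) _) (le_trans hrho1_ge hz1)
  have hzb : ∀ m : ℤ, ‖z‖ ^ m ≤ ω m := by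
    intro m
    obtain ⟨n, rfl | rfl⟩ := Int.eq_nat_or_neg m
    · rcases Nat.eq_zero_or_pos n with h | h
      · subst h; simpa using hω1 0
      · have hn0 : ((n:ℝ)) ≠ 0 := Nat.cast_ne_zero.mpr (by omega)
        have h2 : ‖z‖ ≤ ω (n : ℤ) ^ ((1:ℝ)/(n:ℝ)) := by
          refine le_trans hz2 (csInf_le ?_ ⟨n, h, rfl⟩)
          exact ⟨0, fun x hx => by
            obtain ⟨m, hm, rfl⟩ := hx
            exact Real.rpow_nonneg (le_of_lt (hωpos _)) _⟩
        have h3 : ‖z‖ ^ n ≤ (ω (n : ℤ) ^ ((1:ℝ)/(n:ℝ))) ^ n :=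
          pow_le_pow_left₀ (norm_nonneg z) h2 n
        have h4 : (ω (n : ℤ) ^ ((1:ℝ)/(n:ℝ))) ^ n = ω (n : ℤ) := by
          rw [← Real.rpow_natCast (ω (n : ℤ) ^ ((1:ℝ)/(n:ℝ))) n,
            ← Real.rpow_mul (le_of_lt (hωpos _)), one_div, inv_mul_cancel₀ hn0,
            Real.rpow_one]
        rw [zpow_natCast]
        rw [h4] at h3
        exact h3
    · rcases Nat.eq_zero_or_pos n with h | h
      · subst h; simpa using hω1 0
      · have hn0 : ((n:ℝ)) ≠ 0 := Nat.cast_ne_zero.mpr (by omega)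
        have h2 : ω (-(n:ℤ)) ^ (-(1:ℝ)/(n:ℝ)) ≤ ‖z‖ :=
          le_trans (le_csSup hSbdd ⟨n, h, rfl⟩) hz1
        have hb0 : (0:ℝ) < ω (-(n:ℤ)) ^ (-(1:ℝ)/(n:ℝ)) := Real.rpow_pos_of_pos (hωpos _) _
        have h3 : (ω (-(n:ℤ)) ^ (-(1:ℝ)/(n:ℝ))) ^ n ≤ ‖z‖ ^ n :=
          pow_le_pow_left₀ (le_of_lt hb0) h2 n
        have h4 : (ω (-(n:ℤ)) ^ (-(1:ℝ)/(n:ℝ))) ^ n = (ω (-(n:ℤ)))⁻¹ := by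
          rw [← Real.rpow_natCast (ω (-(n:ℤ)) ^ (-(1:ℝ)/(n:ℝ))) n,
            ← Real.rpow_mul (le_of_lt (hωpos _))]
          rw [show (-(1:ℝ)/(n:ℝ)) * (n:ℝ) = -1 by field_simp]
          exact Real.rpow_neg_one _
        rw [h4] at h3
        have h5 : (‖z‖ ^ n)⁻¹ ≤ ((ω (-(n:ℤ)))⁻¹)⁻¹ :=
          inv_anti₀ (inv_pos.mpr (hωpos _)) h3
        rw [inv_inv] at h5
        rw [zpow_neg, zpow_natCast]
        exact h5
  -- τ
  set τ : ℤ → ℝ := fun n => (‖z‖ ^ n) ^ q * ω n ^ (-q) with hτdef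
  have hznn : ∀ m : ℤ, (0:ℝ) ≤ ‖z‖ ^ m := fun m => zpow_nonneg (norm_nonneg z) m
  have hτpos : ∀ n, 0 < τ n := fun n =>
    mul_pos (Real.rpow_pos_of_pos (zpow_pos hzpos n) q) (hσpos n)
  have hτdiv : ∀ n : ℤ, (‖z‖ ^ n / ω n) ^ q = τ n := by
    intro n
    simp only [hτdef]
    rw [Real.div_rpow (hznn n) (le_of_lt (hωpos n)), Real.rpow_neg (le_of_lt (hωpos n)),
      div_eq_mul_inv]
  have hτle1 : ∀ n, τ n ≤ 1 := by
    intro n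
    rw [← hτdiv n]
    exact Real.rpow_le_one (div_nonneg (hznn n) (le_of_lt (hωpos n)))
      (div_le_one_of_le₀ (hzb n) (le_of_lt (hωpos n))) (le_of_lt hq0)
  have hτmul : ∀ a b : ℤ, τ a * τ b = (‖z‖ ^ (a + b)) ^ q * (ω a ^ (-q) * ω b ^ (-q)) := by
    intro a b
    simp only [hτdef]
    rw [zpow_add₀ (ne_of_gt hzpos), Real.mul_rpow (hznn a) (hznn b)]
    ring
  have hgsum : ∀ n : ℤ, Summable (fun k : ℤ => ω k ^ (-q) * ω (n - k) ^ (-q)) := by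
    intro n
    refine Summable.of_nonneg_of_le
      (fun k => le_of_lt (mul_pos (hσpos k) (hσpos _))) (fun k => ?_) hsum
    calc ω k ^ (-q) * ω (n - k) ^ (-q) ≤ ω k ^ (-q) * 1 :=
          mul_le_mul_of_nonneg_left (hσle1 _) (le_of_lt (hσpos k))
      _ = ω k ^ (-q) := mul_one _
  -- key doubling inequality
  have hkey : ∀ c : ℤ, c = 1 ∨ c = -1 → ∀ N : ℕ,
      (∑ n ∈ Finset.range N, τ (c * n)) ^ 2 ≤ ∑ n ∈ Finset.range (2 * N), τ (c * n) := by
    intro c hc N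
    have hc0 : c ≠ 0 := by rcases hc with rfl | rfl <;> norm_num
    rw [sq, Finset.sum_mul_sum]
    rw [← Finset.sum_product' (s := Finset.range N) (t := Finset.range N)
      (f := fun j m : ℕ => τ (c * j) * τ (c * m))]
    rw [← Finset.sum_fiberwise_of_maps_to (g := fun p : ℕ × ℕ => p.1 + p.2)
      (t := Finset.range (2 * N))
      (fun p hp => by
        simp only [Finset.mem_product, Finset.mem_range] at hp
        simp only [Finset.mem_range]
        omega)]
    apply Finset.sum_le_sum
    intro n hn
    have hstep : ∀ p ∈ (Finset.range N ×ˢ Finset.range N).filter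
        (fun p : ℕ × ℕ => p.1 + p.2 = n),
        τ (c * p.1) * τ (c * p.2) =
          (‖z‖ ^ (c * (n:ℤ))) ^ q *
            (ω (c * (p.1:ℤ)) ^ (-q) * ω (c * (n:ℤ) - c * (p.1:ℤ)) ^ (-q)) := by
      intro p hp
      simp only [Finset.mem_filter] at hp
      have hsum' : c * (p.1:ℤ) + c * (p.2:ℤ) = c * (n:ℤ) := by
        rw [← hp.2]; push_cast; ring
      rw [hτmul, hsum']
      congr 2
      rw [← hsum']; ring
    rw [Finset.sum_congr rfl hstep, ← Finset.mul_sum]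
    have hle : ∑ p ∈ (Finset.range N ×ˢ Finset.range N).filter
        (fun p : ℕ × ℕ => p.1 + p.2 = n),
        ω (c * (p.1:ℤ)) ^ (-q) * ω (c * (n:ℤ) - c * (p.1:ℤ)) ^ (-q) ≤ ω (c * (n:ℤ)) ^ (-q) := by
      refine le_trans ?_ (hconv (c * n))
      have himg := Summable.sum_le_tsum (f := fun k : ℤ => ω k ^ (-q) * ω (c * (n:ℤ) - k) ^ (-q))
        (((Finset.range N ×ˢ Finset.range N).filter
          (fun p : ℕ × ℕ => p.1 + p.2 = n)).image (fun p : ℕ × ℕ => c * (p.1:ℤ)))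
        (fun k _ => le_of_lt (mul_pos (hσpos k) (hσpos _))) (hgsum (c * n))
      rw [Finset.sum_image (fun x hx y hy hxy => ?_)] at himg
      · exact himg
      · simp only [Finset.mem_coe, Finset.mem_filter, Finset.mem_product, Finset.mem_range] at hx hy
        have h1 : (x.1 : ℤ) = y.1 := mul_left_cancel₀ hc0 hxy
        have h1' : x.1 = y.1 := by exact_mod_cast h1
        have h2 : x.2 = y.2 := by omega
        exact Prod.ext h1' h2
    calc (‖z‖ ^ (c * (n:ℤ))) ^ q * ∑ p ∈ (Finset.range N ×ˢ Finset.range N).filter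
          (fun p : ℕ × ℕ => p.1 + p.2 = n),
          ω (c * (p.1:ℤ)) ^ (-q) * ω (c * (n:ℤ) - c * (p.1:ℤ)) ^ (-q)
        ≤ (‖z‖ ^ (c * (n:ℤ))) ^ q * ω (c * (n:ℤ)) ^ (-q) :=
          mul_le_mul_of_nonneg_left hle (Real.rpow_nonneg (hznn _) q)
      _ = τ (c * n) := rfl
  -- summability of τ
  have hτsum : Summable τ := by
    have hpos : Summable (fun n : ℕ => τ n) := by
      have := aux_summable (fun n : ℕ => τ ((1:ℤ) * n))
        (fun n => le_of_lt (hτpos _)) (fun n => hτle1 _) (hkey 1 (Or.inl rfl))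
      simpa using this
    have hneg : Summable (fun n : ℕ => τ (-(n:ℤ))) := by
      have := aux_summable (fun n : ℕ => τ ((-1:ℤ) * n))
        (fun n => le_of_lt (hτpos _)) (fun n => hτle1 _) (hkey (-1) (Or.inr rfl))
      simpa using this
    exact Summable.of_nat_of_neg hpos hneg
  -- conclusion via Young's inequality
  have hmain : Summable fun n : ℤ => ‖a n‖ * ‖z‖ ^ n := by
    refine Summable.of_nonneg_of_le
      (fun n => mul_nonneg (norm_nonneg _) (hznn n)) (fun n => ?_)
      ((ha.div_const p).add (hτsum.div_const q))
    have hωne : ω n ≠ 0 := ne_of_gt (hωpos n)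
    have hy := Real.young_inequality_of_nonneg (a := ‖a n‖ * ω n) (b := ‖z‖ ^ n / ω n)
      (mul_nonneg (norm_nonneg _) (le_of_lt (hωpos n)))
      (div_nonneg (hznn n) (le_of_lt (hωpos n))) hcj
    have e1 : (‖a n‖ * ω n) * (‖z‖ ^ n / ω n) = ‖a n‖ * ‖z‖ ^ n := by
      field_simp
    have e2 : (‖a n‖ * ω n) ^ p = ‖a n‖ ^ p * ω n ^ p :=
      Real.mul_rpow (norm_nonneg _) (le_of_lt (hωpos n))
    rw [e1, e2, hτdiv n] at hy
    exact hy
  refine ⟨hmain, ?_⟩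
  apply Summable.of_norm
  have : ∀ n : ℤ, ‖a n * z ^ n‖ = ‖a n‖ * ‖z‖ ^ n := by
    intro n
    rw [norm_mul, norm_zpow]
  simpa only [this] using hmain
end

section
/- Let 1 < p < ∞ with conjugate index q, let ω be a weight on ℤ satisfying ∑_{n∈ℤ} ω(n)^{-q} < ∞ and (ω^{-q} ⋆ ω^{-q})(n) ≤ ω(n)^{-q} for all n ∈ ℤ, let A be a unital Banach algebra, let c : ℤ → A satisfy ∑_{k∈ℤ} ‖c(k)‖^p ω(k)^p < ∞, and let z ∈ ℂ satisfy ρ₁(ω) ≤ |z| ≤ ρ₂(ω). Then ∑_{k∈ℤ} ‖c(k)‖ |z|^k ≤ (∑_{k∈ℤ} ‖c(k)‖^p ω(k)^p)^{1/p} · (∑_{k∈ℤ} |z|^{kq} ω(k)^{-q})^{1/q} ≤ (∑_{k∈ℤ} ‖c(k)‖^p ω(k)^p)^{1/p}; in particular ‖∑_{k∈ℤ} c(k) z^k‖ ≤ (∑_{k∈ℤ} ‖c(k)‖^p ω(k)^p)^{1/p}. -/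
open scoped BigOperators

-- aux lemma: |z|^(k:ℝ) ≤ ω k
lemma aux_rpow_le (ω : ℤ → ℝ) (hω : IsWeight ω) (z : ℂ)
    (hz1 : rho1 ω ≤ ‖z‖) (hz2 : ‖z‖ ≤ rho2 ω) (k : ℤ) :
    ‖z‖ ^ (k : ℝ) ≤ ω k := by
  have hω1 := hω.1
  have hωpos : ∀ n, (0:ℝ) < ω n := fun n => lt_of_lt_of_le one_pos (hω1 n)
  have hz0 : 0 ≤ ‖z‖ := norm_nonneg z
  obtain ⟨n, rfl | rfl⟩ := Int.eq_nat_or_neg k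
  · rcases Nat.eq_zero_or_pos n with rfl | hn
    · simpa using hω1 0
    · have hmem : ω (n:ℤ) ^ ((1:ℝ)/(n:ℝ)) ∈
          {x : ℝ | ∃ m : ℕ, 0 < m ∧ x = ω (m : ℤ) ^ ((1 : ℝ) / (m : ℝ))} := ⟨n, hn, rfl⟩
      have hbdd : BddBelow {x : ℝ | ∃ m : ℕ, 0 < m ∧ x = ω (m : ℤ) ^ ((1 : ℝ) / (m : ℝ))} :=
        ⟨0, fun x ⟨m, _, hx⟩ => hx ▸ Real.rpow_nonneg (hωpos _).le _⟩
      have h2 : ‖z‖ ≤ ω (n:ℤ) ^ ((1:ℝ)/(n:ℝ)) := hz2.trans (csInf_le hbdd hmem)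
      have hne : (n:ℝ) ≠ 0 := Nat.cast_ne_zero.mpr hn.ne'
      calc ‖z‖ ^ ((n:ℤ):ℝ) ≤ (ω (n:ℤ) ^ ((1:ℝ)/(n:ℝ))) ^ ((n:ℤ):ℝ) := by
            apply Real.rpow_le_rpow hz0 h2 (by positivity)
        _ = ω (n:ℤ) := by
            rw [← Real.rpow_mul (hωpos _).le]
            rw [show (1:ℝ)/(n:ℝ) * ((n:ℤ):ℝ) = 1 by push_cast; field_simp]
            exact Real.rpow_one _
  · rcases Nat.eq_zero_or_pos n with rfl | hn
    · simpa using hω1 0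
    · have hmem : ω (-(n:ℤ)) ^ (-(1:ℝ)/(n:ℝ)) ∈
          {x : ℝ | ∃ m : ℕ, 0 < m ∧ x = ω (-(m : ℤ)) ^ (-(1 : ℝ) / (m : ℝ))} := ⟨n, hn, rfl⟩
      have hbdd : BddAbove {x : ℝ | ∃ m : ℕ, 0 < m ∧ x = ω (-(m : ℤ)) ^ (-(1 : ℝ) / (m : ℝ))} := by
        refine ⟨1, fun x ⟨m, hm, hx⟩ => ?_⟩
        rw [hx]
        exact Real.rpow_le_one_of_one_le_of_nonpos (hω1 _)
          (div_nonpos_of_nonpos_of_nonneg (by norm_num) (Nat.cast_nonneg _))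
      have h1 : ω (-(n:ℤ)) ^ (-(1:ℝ)/(n:ℝ)) ≤ ‖z‖ := (le_csSup hbdd hmem).trans hz1
      have hpos : (0:ℝ) < ω (-(n:ℤ)) ^ (-(1:ℝ)/(n:ℝ)) := Real.rpow_pos_of_pos (hωpos _) _
      have hne : (n:ℝ) ≠ 0 := Nat.cast_ne_zero.mpr hn.ne'
      calc ‖z‖ ^ (((-(n:ℤ)):ℤ):ℝ) ≤ (ω (-(n:ℤ)) ^ (-(1:ℝ)/(n:ℝ))) ^ (((-(n:ℤ)):ℤ):ℝ) := by
            apply Real.rpow_le_rpow_of_nonpos hpos h1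
            push_cast
            exact neg_nonpos.mpr (Nat.cast_nonneg _)
        _ = ω (-(n:ℤ)) := by
            rw [← Real.rpow_mul (hωpos _).le]
            rw [show (-(1:ℝ)/(n:ℝ)) * (((-(n:ℤ)):ℤ):ℝ) = 1 by push_cast; field_simp]
            exact Real.rpow_one _

lemma aux_sum_v_le_one (q : ℝ) (hq0 : 0 < q) (ω : ℤ → ℝ) (hω : IsWeight ω)
    (hsum : Summable fun n : ℤ => ω n ^ (-q))
    (hconv : ∀ n : ℤ, (∑' k : ℤ, ω k ^ (-q) * ω (n - k) ^ (-q)) ≤ ω n ^ (-q))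
    (z : ℂ) (hz0 : 0 < ‖z‖) (hzk : ∀ k : ℤ, ‖z‖ ^ (k : ℝ) ≤ ω k) :
    ∀ F : Finset ℤ, ∑ k ∈ F, ‖z‖ ^ (q * (k : ℝ)) * ω k ^ (-q) ≤ 1 := by
  have hω1 := hω.1
  have hωpos : ∀ n, (0:ℝ) < ω n := fun n => lt_of_lt_of_le one_pos (hω1 n)
  set v : ℤ → ℝ := fun k => ‖z‖ ^ (q * (k : ℝ)) * ω k ^ (-q) with hvdef
  have hu_nonneg : ∀ k : ℤ, 0 ≤ ω k ^ (-q) := fun k => Real.rpow_nonneg (hωpos k).le _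
  have hu_le_one : ∀ k : ℤ, ω k ^ (-q) ≤ 1 := fun k =>
    Real.rpow_le_one_of_one_le_of_nonpos (hω1 k) (neg_nonpos.mpr hq0.le)
  have hv_nonneg : ∀ k : ℤ, 0 ≤ v k := fun k =>
    mul_nonneg (Real.rpow_nonneg hz0.le _) (hu_nonneg k)
  have hveq : ∀ k : ℤ, (‖z‖ ^ ((k:ℤ) : ℝ) * (ω k)⁻¹) ^ q = v k := fun k => by
    rw [Real.mul_rpow (Real.rpow_nonneg hz0.le _) (inv_nonneg.mpr (hωpos k).le),
      ← Real.rpow_mul hz0.le, mul_comm ((k:ℤ):ℝ) q, Real.inv_rpow (hωpos k).le,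
      ← Real.rpow_neg (hωpos k).le]
  have hv_le_one : ∀ k : ℤ, v k ≤ 1 := fun k => by
    rw [← hveq k]
    refine Real.rpow_le_one (mul_nonneg (Real.rpow_nonneg hz0.le _)
      (inv_nonneg.mpr (hωpos k).le)) ?_ hq0.le
    rw [← div_eq_mul_inv, div_le_one (hωpos k)]
    exact hzk k
  have hconv_summ : ∀ n : ℤ, Summable (fun j : ℤ => ω j ^ (-q) * ω (n - j) ^ (-q)) := fun n =>
    Summable.of_nonneg_of_le (fun j => mul_nonneg (hu_nonneg j) (hu_nonneg _))
      (fun j => mul_le_of_le_one_right (hu_nonneg j) (hu_le_one _)) hsum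
  have hvmul : ∀ k m : ℤ, v k * v m
      = ‖z‖ ^ (q * ((k + m : ℤ) : ℝ)) * (ω k ^ (-q) * ω m ^ (-q)) := fun k m => by
    simp only [hvdef]
    rw [show ‖z‖ ^ (q * (k:ℝ)) * ω k ^ (-q) * (‖z‖ ^ (q * (m:ℝ)) * ω m ^ (-q))
        = ‖z‖ ^ (q * (k:ℝ)) * ‖z‖ ^ (q * (m:ℝ)) * (ω k ^ (-q) * ω m ^ (-q)) by ring,
      ← Real.rpow_add hz0, show q * (k:ℝ) + q * (m:ℝ) = q * ((k + m : ℤ) : ℝ) by push_cast; ring]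
  -- key doubling inequality
  have hkey : ∀ F : Finset ℤ, (∑ k ∈ F, v k) ^ 2
      ≤ ∑ n ∈ (F ×ˢ F).image (fun p : ℤ × ℤ => p.1 + p.2), v n := by
    intro F
    have h1 : (∑ k ∈ F, v k) ^ 2 = ∑ p ∈ F ×ˢ F, v p.1 * v p.2 := by
      rw [sq, Finset.sum_mul_sum, ← Finset.sum_product']
    rw [h1, ← Finset.sum_fiberwise_of_maps_to
      (g := fun p : ℤ × ℤ => p.1 + p.2)
      (fun p hp => Finset.mem_image_of_mem _ hp) (fun p => v p.1 * v p.2)]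
    apply Finset.sum_le_sum
    intro n hn
    have hstep : ∀ p ∈ (F ×ˢ F).filter (fun p : ℤ × ℤ => p.1 + p.2 = n),
        v p.1 * v p.2 = ‖z‖ ^ (q * (n : ℝ)) * (ω p.1 ^ (-q) * ω (n - p.1) ^ (-q)) := by
      intro p hp
      obtain ⟨hpF, hpn⟩ := Finset.mem_filter.mp hp
      have h2 : p.2 = n - p.1 := by omega
      rw [hvmul p.1 p.2, hpn, h2]
    rw [Finset.sum_congr rfl hstep, ← Finset.mul_sum]
    have hinj : ∀ x ∈ (F ×ˢ F).filter (fun p : ℤ × ℤ => p.1 + p.2 = n),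
        ∀ y ∈ (F ×ˢ F).filter (fun p : ℤ × ℤ => p.1 + p.2 = n),
        x.1 = y.1 → x = y := by
      intro x hx y hy hxy
      obtain ⟨_, hx2⟩ := Finset.mem_filter.mp hx
      obtain ⟨_, hy2⟩ := Finset.mem_filter.mp hy
      exact Prod.ext hxy (by omega)
    have hsum_eq : ∑ p ∈ (F ×ˢ F).filter (fun p : ℤ × ℤ => p.1 + p.2 = n),
        (ω p.1 ^ (-q) * ω (n - p.1) ^ (-q))
        = ∑ j ∈ ((F ×ˢ F).filter (fun p : ℤ × ℤ => p.1 + p.2 = n)).image Prod.fst,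
          (ω j ^ (-q) * ω (n - j) ^ (-q)) :=
      (Finset.sum_image (g := Prod.fst) (f := fun j : ℤ => ω j ^ (-q) * ω (n - j) ^ (-q)) hinj).symm
    rw [hsum_eq]
    calc ‖z‖ ^ (q * (n : ℝ)) *
          ∑ j ∈ ((F ×ˢ F).filter (fun p : ℤ × ℤ => p.1 + p.2 = n)).image Prod.fst,
            (ω j ^ (-q) * ω (n - j) ^ (-q))
        ≤ ‖z‖ ^ (q * (n : ℝ)) * ∑' j : ℤ, ω j ^ (-q) * ω (n - j) ^ (-q) := by
          apply mul_le_mul_of_nonneg_left _ (Real.rpow_nonneg hz0.le _)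
          exact (hconv_summ n).sum_le_tsum _ (fun j _ => mul_nonneg (hu_nonneg j) (hu_nonneg _))
      _ ≤ ‖z‖ ^ (q * (n : ℝ)) * ω n ^ (-q) :=
          mul_le_mul_of_nonneg_left (hconv n) (Real.rpow_nonneg hz0.le _)
  -- growth bound
  have grow : ∀ (m N : ℕ) (F : Finset ℤ), F ⊆ Finset.Icc (-(N:ℤ)) (N:ℤ) →
      (∑ k ∈ F, v k) ^ (2 ^ m) ≤ (2 * (N:ℝ) + 1) * 2 ^ m := by
    intro m
    induction m with
    | zero =>
      intro N F hF
      simp only [pow_zero, pow_one, mul_one]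
      have h1 : ∑ k ∈ F, v k ≤ F.card • (1:ℝ) :=
        Finset.sum_le_card_nsmul F v 1 (fun k _ => hv_le_one k)
      have h2 : F.card ≤ (Finset.Icc (-(N:ℤ)) (N:ℤ)).card := Finset.card_le_card hF
      have h3 : (Finset.Icc (-(N:ℤ)) (N:ℤ)).card = 2 * N + 1 := by
        rw [Int.card_Icc]; omega
      rw [h3] at h2
      rw [nsmul_eq_mul, mul_one] at h1
      calc ∑ k ∈ F, v k ≤ (F.card : ℝ) := h1
        _ ≤ ((2 * N + 1 : ℕ) : ℝ) := by exact_mod_cast h2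
        _ = 2 * (N:ℝ) + 1 := by push_cast; ring
    | succ m ih =>
      intro N F hF
      have hmaps : (F ×ˢ F).image (fun p : ℤ × ℤ => p.1 + p.2)
          ⊆ Finset.Icc (-((2*N : ℕ):ℤ)) ((2*N : ℕ):ℤ) := by
        intro n hn
        simp only [Finset.mem_image, Finset.mem_product] at hn
        obtain ⟨p, ⟨h1, h2⟩, rfl⟩ := hn
        have ha := Finset.mem_Icc.mp (hF h1)
        have hb := Finset.mem_Icc.mp (hF h2)
        simp only [Finset.mem_Icc]
        push_cast
        omega
      have h2 := ih (2*N) _ hmaps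
      calc (∑ k ∈ F, v k) ^ (2 ^ (m+1)) = ((∑ k ∈ F, v k) ^ 2) ^ (2 ^ m) := by
            rw [← pow_mul, pow_succ, mul_comm (2^m) 2]
        _ ≤ (∑ n ∈ (F ×ˢ F).image (fun p : ℤ × ℤ => p.1 + p.2), v n) ^ (2 ^ m) :=
            pow_le_pow_left₀ (sq_nonneg _) (hkey F) _
        _ ≤ (2 * ((2*N : ℕ):ℝ) + 1) * 2 ^ m := h2
        _ ≤ (2 * (N:ℝ) + 1) * 2 ^ (m+1) := by
            have h3 : (0:ℝ) < 2 ^ m := pow_pos two_pos m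
            rw [pow_succ]
            push_cast
            nlinarith
  -- conclusion
  intro F
  by_contra hgt
  push_neg at hgt
  set s := ∑ k ∈ F, v k with hs
  set N := F.sup (fun k => k.natAbs) with hN
  have hFsub : F ⊆ Finset.Icc (-(N:ℤ)) (N:ℤ) := by
    intro k hk
    have h : k.natAbs ≤ N := Finset.le_sup hk
    simp only [Finset.mem_Icc]
    omega
  obtain ⟨m₀, hm₀⟩ := pow_unbounded_of_one_lt (4*(2*(N:ℝ)+1)/(s-1)^2) (one_lt_two)
  have hgrow := grow (m₀+1) N F hFsub
  have hb := one_add_mul_le_pow (show (-2:ℝ) ≤ s - 1 by linarith) (2 ^ m₀)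
  rw [show (1:ℝ) + (s-1) = s by ring] at hb
  push_cast at hb
  have hT : (0:ℝ) < 2 ^ m₀ := pow_pos two_pos m₀
  have ha_nonneg : (0:ℝ) ≤ 2 ^ m₀ * (s - 1) := by nlinarith
  have hsq : ((2:ℝ) ^ m₀ * (s-1)) ^ 2 ≤ (s ^ (2 ^ m₀)) ^ 2 := by
    apply pow_le_pow_left₀ ha_nonneg (le_trans (by linarith) hb)
  rw [← pow_mul, ← pow_succ] at hsq
  have hfinal : ((2:ℝ) ^ m₀ * (s-1)) ^ 2 ≤ (2 * (N:ℝ) + 1) * 2 ^ (m₀+1) :=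
    hsq.trans hgrow
  have hm₀' : 4*(2*(N:ℝ)+1) < 2 ^ m₀ * (s-1)^2 := by
    rw [div_lt_iff₀ (pow_pos (by linarith) 2)] at hm₀
    nlinarith
  have hNpos : (0:ℝ) ≤ (N:ℝ) := Nat.cast_nonneg _
  rw [show (2:ℝ)^(m₀+1) = 2^m₀ * 2 from pow_succ 2 m₀] at hfinal
  nlinarith [mul_lt_mul_of_pos_left hm₀' hT,
    mul_pos hT (show (0:ℝ) < 2*(N:ℝ)+1 by linarith)]


/-- **Hölder estimate on the annulus.** Let `1 < p < ∞` with conjugate index `q`, `ω` a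
weight with `∑ ω(n)^{-q} < ∞` and `ω^{-q} ⋆ ω^{-q} ≤ ω^{-q}`, `A` a unital Banach algebra,
`∑ ‖c(k)‖^p ω(k)^p < ∞`, and `ρ₁(ω) ≤ |z| ≤ ρ₂(ω)`.  Then
`∑ ‖c(k)‖ |z|^k ≤ (∑ ‖c(k)‖^p ω(k)^p)^{1/p} (∑ |z|^{kq} ω(k)^{-q})^{1/q}
  ≤ (∑ ‖c(k)‖^p ω(k)^p)^{1/p}`, and `‖∑ c(k) z^k‖ ≤ (∑ ‖c(k)‖^p ω(k)^p)^{1/p}`. -/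
theorem stmt7 {A : Type*} [NormedRing A] [NormedAlgebra ℂ A] [CompleteSpace A]
    (p q : ℝ) (hp : 1 < p) (hpq : 1 / p + 1 / q = 1)
    (ω : ℤ → ℝ) (hω : IsWeight ω)
    (hsum : Summable fun n : ℤ => ω n ^ (-q))
    (hconv : ∀ n : ℤ, (∑' k : ℤ, ω k ^ (-q) * ω (n - k) ^ (-q)) ≤ ω n ^ (-q))
    (c : ℤ → A) (hc : Summable fun k : ℤ => ‖c k‖ ^ p * ω k ^ p)
    (z : ℂ) (hz1 : rho1 ω ≤ ‖z‖) (hz2 : ‖z‖ ≤ rho2 ω) :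
    (Summable fun k : ℤ => ‖c k‖ * ‖z‖ ^ k) ∧
    (∑' k : ℤ, ‖c k‖ * ‖z‖ ^ k) ≤
      (∑' k : ℤ, ‖c k‖ ^ p * ω k ^ p) ^ (1 / p) *
        (∑' k : ℤ, ‖z‖ ^ (q * (k : ℝ)) * ω k ^ (-q)) ^ (1 / q) ∧
    (∑' k : ℤ, ‖c k‖ ^ p * ω k ^ p) ^ (1 / p) *
        (∑' k : ℤ, ‖z‖ ^ (q * (k : ℝ)) * ω k ^ (-q)) ^ (1 / q) ≤
      (∑' k : ℤ, ‖c k‖ ^ p * ω k ^ p) ^ (1 / p) ∧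
    (Summable fun k : ℤ => z ^ k • c k) ∧
    ‖∑' k : ℤ, z ^ k • c k‖ ≤ (∑' k : ℤ, ‖c k‖ ^ p * ω k ^ p) ^ (1 / p) := by
  have hω1 := hω.1
  have hωpos : ∀ n, (0:ℝ) < ω n := fun n => lt_of_lt_of_le one_pos (hω1 n)
  have hPQ : p.HolderConjugate q := Real.holderConjugate_iff.mpr ⟨hp, by rw [← one_div, ← one_div]; exact hpq⟩
  have hq0 : 0 < q := hPQ.symm.pos
  -- ‖z‖ > 0
  have hbdd1 : BddAbove {x : ℝ | ∃ m : ℕ, 0 < m ∧ x = ω (-(m : ℤ)) ^ (-(1 : ℝ) / (m : ℝ))} := by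
    refine ⟨1, fun x ⟨m, hm, hx⟩ => ?_⟩
    rw [hx]
    exact Real.rpow_le_one_of_one_le_of_nonpos (hω1 _)
      (div_nonpos_of_nonpos_of_nonneg (by norm_num) (Nat.cast_nonneg _))
  have hmem1 : ω (-((1:ℕ) : ℤ)) ^ (-(1 : ℝ) / ((1:ℕ) : ℝ)) ∈
      {x : ℝ | ∃ m : ℕ, 0 < m ∧ x = ω (-(m : ℤ)) ^ (-(1 : ℝ) / (m : ℝ))} := ⟨1, one_pos, rfl⟩
  have hz0 : 0 < ‖z‖ :=
    (Real.rpow_pos_of_pos (hωpos _) _).trans_le ((le_csSup hbdd1 hmem1).trans hz1)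
  have hzk : ∀ k : ℤ, ‖z‖ ^ (k : ℝ) ≤ ω k := aux_rpow_le ω hω z hz1 hz2
  -- summability and bound for v
  have hFle := aux_sum_v_le_one q hq0 ω hω hsum hconv z hz0 hzk
  have hv_nonneg : ∀ k : ℤ, 0 ≤ ‖z‖ ^ (q * (k : ℝ)) * ω k ^ (-q) := fun k =>
    mul_nonneg (Real.rpow_nonneg hz0.le _) (Real.rpow_nonneg (hωpos k).le _)
  have hv_summ : Summable fun k : ℤ => ‖z‖ ^ (q * (k : ℝ)) * ω k ^ (-q) :=
    summable_of_sum_le hv_nonneg hFle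
  have hv_tsum : (∑' k : ℤ, ‖z‖ ^ (q * (k : ℝ)) * ω k ^ (-q)) ≤ 1 :=
    hv_summ.tsum_le_of_sum_le hFle
  -- Hölder setup
  have hveq : ∀ k : ℤ, (‖z‖ ^ ((k:ℤ) : ℝ) * (ω k)⁻¹) ^ q
      = ‖z‖ ^ (q * (k : ℝ)) * ω k ^ (-q) := fun k => by
    rw [Real.mul_rpow (Real.rpow_nonneg hz0.le _) (inv_nonneg.mpr (hωpos k).le),
      ← Real.rpow_mul hz0.le, mul_comm ((k:ℤ):ℝ) q, Real.inv_rpow (hωpos k).le,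
      ← Real.rpow_neg (hωpos k).le]
  have hfeq : ∀ k : ℤ, (‖c k‖ * ω k) ^ p = ‖c k‖ ^ p * ω k ^ p := fun k =>
    Real.mul_rpow (norm_nonneg _) (hωpos k).le
  have hf_sum : Summable fun k : ℤ => (‖c k‖ * ω k) ^ p := by
    rw [show (fun k : ℤ => (‖c k‖ * ω k) ^ p) = fun k : ℤ => ‖c k‖ ^ p * ω k ^ p from
      funext hfeq]
    exact hc
  have hg_sum : Summable fun k : ℤ => (‖z‖ ^ ((k:ℤ) : ℝ) * (ω k)⁻¹) ^ q := by
    rw [show (fun k : ℤ => (‖z‖ ^ ((k:ℤ) : ℝ) * (ω k)⁻¹) ^ q)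
      = fun k : ℤ => ‖z‖ ^ (q * (k : ℝ)) * ω k ^ (-q) from funext hveq]
    exact hv_summ
  have H := Real.summable_and_inner_le_Lp_mul_Lq_tsum_of_nonneg hPQ
    (fun k : ℤ => mul_nonneg (norm_nonneg (c k)) (hωpos k).le)
    (fun k : ℤ => mul_nonneg (Real.rpow_nonneg hz0.le _) (inv_nonneg.mpr (hωpos k).le))
    hf_sum hg_sum
  have heq : (fun k : ℤ => (‖c k‖ * ω k) * (‖z‖ ^ ((k:ℤ) : ℝ) * (ω k)⁻¹))
      = fun k : ℤ => ‖c k‖ * ‖z‖ ^ k := by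
    funext k
    have hωne : ω k ≠ 0 := (hωpos k).ne'
    rw [Real.rpow_intCast]
    field_simp
  have S1 : Summable fun k : ℤ => ‖c k‖ * ‖z‖ ^ k := by
    rw [← heq]; exact H.1
  have e1 : (∑' k : ℤ, (‖c k‖ * ω k) * (‖z‖ ^ ((k:ℤ) : ℝ) * (ω k)⁻¹))
      = ∑' k : ℤ, ‖c k‖ * ‖z‖ ^ k := by rw [heq]
  have e2 : (∑' k : ℤ, (‖c k‖ * ω k) ^ p) = ∑' k : ℤ, ‖c k‖ ^ p * ω k ^ p :=
    tsum_congr hfeq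
  have e3 : (∑' k : ℤ, (‖z‖ ^ ((k:ℤ) : ℝ) * (ω k)⁻¹) ^ q)
      = ∑' k : ℤ, ‖z‖ ^ (q * (k : ℝ)) * ω k ^ (-q) := tsum_congr hveq
  have I1 : (∑' k : ℤ, ‖c k‖ * ‖z‖ ^ k) ≤
      (∑' k : ℤ, ‖c k‖ ^ p * ω k ^ p) ^ (1 / p) *
        (∑' k : ℤ, ‖z‖ ^ (q * (k : ℝ)) * ω k ^ (-q)) ^ (1 / q) := by
    rw [← e1, ← e2, ← e3]; exact H.2
  have hT1nonneg : 0 ≤ (∑' k : ℤ, ‖c k‖ ^ p * ω k ^ p) ^ (1 / p) :=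
    Real.rpow_nonneg (tsum_nonneg fun k => mul_nonneg (Real.rpow_nonneg (norm_nonneg _) _)
      (Real.rpow_nonneg (hωpos k).le _)) _
  have I2 : (∑' k : ℤ, ‖c k‖ ^ p * ω k ^ p) ^ (1 / p) *
      (∑' k : ℤ, ‖z‖ ^ (q * (k : ℝ)) * ω k ^ (-q)) ^ (1 / q) ≤
      (∑' k : ℤ, ‖c k‖ ^ p * ω k ^ p) ^ (1 / p) := by
    apply mul_le_of_le_one_right hT1nonneg
    exact Real.rpow_le_one (tsum_nonneg hv_nonneg) hv_tsum (by positivity)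
  have hnorm_eq : (fun k : ℤ => ‖z ^ k • c k‖) = fun k : ℤ => ‖c k‖ * ‖z‖ ^ k := by
    funext k
    rw [norm_smul, norm_zpow, mul_comm]
  have S2 : Summable fun k : ℤ => z ^ k • c k := by
    apply Summable.of_norm
    rw [hnorm_eq]
    exact S1
  have I3 : ‖∑' k : ℤ, z ^ k • c k‖ ≤ (∑' k : ℤ, ‖c k‖ ^ p * ω k ^ p) ^ (1 / p) := by
    calc ‖∑' k : ℤ, z ^ k • c k‖ ≤ ∑' k : ℤ, ‖z ^ k • c k‖ :=
          norm_tsum_le_tsum_norm (by rw [hnorm_eq]; exact S1)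
      _ = ∑' k : ℤ, ‖c k‖ * ‖z‖ ^ k := by rw [hnorm_eq]
      _ ≤ _ := I1.trans I2
  exact ⟨S1, I1, I2, S2, I3⟩
end

section
/- Let 1 < p < ∞ with conjugate index q, let ω be a weight on ℝ satisfying ∫_ℝ ω(x)^{-q} dx < ∞ and (ω^{-q} ⋆ ω^{-q})(x) ≤ ω(x)^{-q} for all x ∈ ℝ, let A be a unital Banach algebra, and let f : ℝ → A be strongly measurable with ∫_ℝ ‖f(x)‖^p ω(x)^p dx < ∞. Then for every z ∈ ℂ with ρ₁(ω) ≤ Re z ≤ ρ₂(ω), one has ∫_ℝ ‖f(x)‖ e^{(Re z)x} dx < ∞; in particular the Fourier transform f̂(z) = ∫_ℝ f(x) e^{zx} dx is a well-defined element of A for every z in the strip S_ω = {z ∈ ℂ : ρ₁(ω) ≤ Re z ≤ ρ₂(ω)}. -/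
open scoped BigOperators
open MeasureTheory
open scoped ENNReal NNReal

/-- A weight on `ℝ`: a Borel measurable `ω : ℝ → [1,∞)` with `ω(x+y) ≤ ω(x)ω(y)`. -/
def IsWeightR (ω : ℝ → ℝ) : Prop :=
  Measurable ω ∧ (∀ x, 1 ≤ ω x) ∧ ∀ x y, ω (x + y) ≤ ω x * ω y

/-- `ρ₁(ω) = sup{(log ω(x))/x : x < 0}`. -/
noncomputable def rho1R (ω : ℝ → ℝ) : ℝ :=
  sSup {r : ℝ | ∃ x : ℝ, x < 0 ∧ r = Real.log (ω x) / x}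

/-- `ρ₂(ω) = inf{(log ω(x))/x : x > 0}`. -/
noncomputable def rho2R (ω : ℝ → ℝ) : ℝ :=
  sInf {r : ℝ | ∃ x : ℝ, 0 < x ∧ r = Real.log (ω x) / x}

/-- A weight on `ℝ` is admissible if `ρ₁(ω) = ρ₂(ω) = 0`. -/
def IsAdmissibleR (ω : ℝ → ℝ) : Prop := rho1R ω = 0 ∧ rho2R ω = 0


/-- Core analytic lemma: if `h : ℝ → (0,1]` is integrable with `h ⋆ h ≤ h`, and
`e^{sx} h x ≤ 1` pointwise, then `x ↦ e^{sx} h x` is integrable. -/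
lemma aux_integrable_of_subconv (h : ℝ → ℝ) (hmeas : Measurable h)
    (hpos : ∀ x, 0 < h x) (hle1 : ∀ x, h x ≤ 1)
    (hint : Integrable h)
    (hconv : ∀ x, (∫ t, h t * h (x - t)) ≤ h x)
    (s : ℝ) (hbd : ∀ x, Real.exp (s * x) * h x ≤ 1) :
    Integrable fun x => Real.exp (s * x) * h x := by
  set G : ℝ → ℝ≥0∞ := fun x => ENNReal.ofReal (Real.exp (s * x) * h x) with hGdef
  have hGmeas : Measurable G :=
    ((Real.measurable_exp.comp (measurable_const.mul measurable_id)).mul hmeas).ennreal_ofReal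
  have hG1 : ∀ x, G x ≤ 1 := by
    intro x
    calc G x ≤ ENNReal.ofReal 1 := ENNReal.ofReal_le_ofReal (hbd x)
      _ = 1 := ENNReal.ofReal_one
  set Gn : ℕ → ℝ → ℝ≥0∞ := fun n => (Set.Icc (-(n : ℝ)) n).indicator G with hGndef
  have hGnmeas : ∀ n, Measurable (Gn n) := fun n => hGmeas.indicator measurableSet_Icc
  set Φ : ℕ → ℝ≥0∞ := fun n => ∫⁻ x, Gn n x with hΦdef
  -- convolution bound for H = ofReal ∘ h
  have hprod_int : ∀ x : ℝ, Integrable (fun t => h t * h (x - t)) := by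
    intro x
    have hm : Measurable fun t => h t * h (x - t) :=
      hmeas.mul (hmeas.comp (measurable_const.sub measurable_id))
    refine hint.mono' hm.aestronglyMeasurable ?_
    filter_upwards with t
    rw [Real.norm_eq_abs, abs_of_nonneg (mul_nonneg (hpos t).le (hpos _).le)]
    exact mul_le_of_le_one_right (hpos t).le (hle1 _)
  have hHH : ∀ x : ℝ,
      (∫⁻ t, ENNReal.ofReal (h t) * ENNReal.ofReal (h (x - t))) ≤ ENNReal.ofReal (h x) := by
    intro x
    have h1 : (∫⁻ t, ENNReal.ofReal (h t) * ENNReal.ofReal (h (x - t)))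
        = ENNReal.ofReal (∫ t, h t * h (x - t)) := by
      rw [ofReal_integral_eq_lintegral_ofReal (hprod_int x)
        (Filter.Eventually.of_forall fun t => mul_nonneg (hpos t).le (hpos _).le)]
      simp_rw [ENNReal.ofReal_mul (hpos _).le]
    rw [h1]
    exact ENNReal.ofReal_le_ofReal (hconv x)
  -- key: Φ n * Φ n ≤ Φ (2n)
  have key : ∀ n, Φ n * Φ n ≤ Φ (2 * n) := by
    intro n
    have swap : Φ n * Φ n = ∫⁻ x, ∫⁻ t, Gn n t * Gn n (x - t) := by
      calc Φ n * Φ n = ∫⁻ t, Gn n t * Φ n := (lintegral_mul_const _ (hGnmeas n)).symm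
        _ = ∫⁻ t, ∫⁻ x, Gn n t * Gn n (x - t) := by
            refine lintegral_congr fun t => ?_
            have hmt : Measurable fun x : ℝ => Gn n (x - t) :=
              (hGnmeas n).comp (measurable_id.sub measurable_const)
            rw [lintegral_const_mul _ hmt, lintegral_sub_right_eq_self (Gn n) t]
        _ = ∫⁻ x, ∫⁻ t, Gn n t * Gn n (x - t) := by
            apply lintegral_lintegral_swap
            exact (((hGnmeas n).comp measurable_fst).mul
              ((hGnmeas n).comp (measurable_snd.sub measurable_fst))).aemeasurable
    have inner : ∀ x : ℝ, (∫⁻ t, Gn n t * Gn n (x - t))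
        ≤ (Set.Icc (-((2 * n : ℕ) : ℝ)) ((2 * n : ℕ) : ℝ)).indicator G x := by
      intro x
      by_cases hx : x ∈ Set.Icc (-((2 * n : ℕ) : ℝ)) ((2 * n : ℕ) : ℝ)
      · rw [Set.indicator_of_mem hx]
        have step1 : ∀ t, Gn n t * Gn n (x - t)
            ≤ ENNReal.ofReal (Real.exp (s * x))
              * (ENNReal.ofReal (h t) * ENNReal.ofReal (h (x - t))) := by
          intro t
          refine (mul_le_mul' (Set.indicator_le_self _ _ t)
            (Set.indicator_le_self _ _ (x - t))).trans (le_of_eq ?_)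
          show ENNReal.ofReal _ * ENNReal.ofReal _ = _
          rw [← ENNReal.ofReal_mul (mul_nonneg (Real.exp_nonneg _) (hpos t).le)]
          have heq : Real.exp (s * t) * h t * (Real.exp (s * (x - t)) * h (x - t))
              = Real.exp (s * x) * (h t * h (x - t)) := by
            rw [show s * x = s * t + s * (x - t) by ring, Real.exp_add]; ring
          rw [heq, ENNReal.ofReal_mul (Real.exp_nonneg _), ENNReal.ofReal_mul (hpos t).le]
        calc (∫⁻ t, Gn n t * Gn n (x - t))
            ≤ ∫⁻ t, ENNReal.ofReal (Real.exp (s * x))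
              * (ENNReal.ofReal (h t) * ENNReal.ofReal (h (x - t))) := lintegral_mono step1
          _ = ENNReal.ofReal (Real.exp (s * x))
              * ∫⁻ t, ENNReal.ofReal (h t) * ENNReal.ofReal (h (x - t)) :=
              lintegral_const_mul' _ _ ENNReal.ofReal_ne_top
          _ ≤ ENNReal.ofReal (Real.exp (s * x)) * ENNReal.ofReal (h x) :=
              mul_le_mul_right (hHH x) _
          _ = G x := (ENNReal.ofReal_mul (Real.exp_nonneg _)).symm
      · rw [Set.indicator_of_notMem hx]
        have hzero : ∀ t, Gn n t * Gn n (x - t) = 0 := by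
          intro t
          by_cases ht : t ∈ Set.Icc (-(n : ℝ)) n
          · have hxt : x - t ∉ Set.Icc (-(n : ℝ)) n := by
              intro hmem
              apply hx
              rw [Set.mem_Icc] at ht hmem ⊢
              push_cast
              constructor <;> linarith [ht.1, ht.2, hmem.1, hmem.2]
            simp only [hGndef, Set.indicator_of_notMem hxt, mul_zero]
          · simp only [hGndef, Set.indicator_of_notMem ht, zero_mul]
        simp only [hzero, lintegral_zero, le_refl]
    rw [swap]
    calc (∫⁻ x, ∫⁻ t, Gn n t * Gn n (x - t))
        ≤ ∫⁻ x, (Set.Icc (-((2 * n : ℕ) : ℝ)) ((2 * n : ℕ) : ℝ)).indicator G x :=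
          lintegral_mono inner
      _ = Φ (2 * n) := rfl
  -- size bound: Φ n ≤ 2n
  have hsize : ∀ n : ℕ, Φ n ≤ ((2 * n : ℕ) : ℝ≥0∞) := by
    intro n
    calc Φ n ≤ ∫⁻ x, (Set.Icc (-(n : ℝ)) n).indicator (fun _ => 1) x := by
          refine lintegral_mono fun x => ?_
          by_cases hx : x ∈ Set.Icc (-(n : ℝ)) n
          · simp only [hGndef, Set.indicator_of_mem hx]; exact hG1 x
          · simp only [hGndef, Set.indicator_of_notMem hx, le_refl]
      _ = volume (Set.Icc (-(n : ℝ)) n) := by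
          rw [lintegral_indicator_const measurableSet_Icc, one_mul]
      _ = ENNReal.ofReal ((n : ℝ) - (-(n : ℝ))) := Real.volume_Icc
      _ = ((2 * n : ℕ) : ℝ≥0∞) := by
          rw [← ENNReal.ofReal_natCast (2 * n)]
          congr 1
          push_cast
          ring
  -- Φ n ≤ 2
  have hΦ2 : ∀ n, Φ n ≤ 2 := by
    intro n
    by_contra hlt
    push_neg at hlt
    have grow : ∀ k : ℕ, ((2 ^ (2 ^ k) : ℕ) : ℝ≥0∞) ≤ Φ (2 ^ k * n) := by
      intro k
      induction k with
      | zero => simpa using hlt.le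
      | succ k ih =>
          have h2 : Φ (2 ^ k * n) * Φ (2 ^ k * n) ≤ Φ (2 * (2 ^ k * n)) := key _
          have heq : 2 * (2 ^ k * n) = 2 ^ (k + 1) * n := by ring
          have hpow : ((2 ^ (2 ^ (k + 1)) : ℕ) : ℝ≥0∞)
              = ((2 ^ (2 ^ k) : ℕ) : ℝ≥0∞) * ((2 ^ (2 ^ k) : ℕ) : ℝ≥0∞) := by
            rw [← Nat.cast_mul, ← pow_add]
            congr 2
            rw [pow_succ]; ring
          rw [hpow, ← heq]
          exact le_trans (mul_le_mul' ih ih) h2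
    have hk := (grow (n + 3)).trans (hsize (2 ^ (n + 3) * n))
    have hnat : (2 ^ (2 ^ (n + 3)) : ℕ) ≤ 2 * (2 ^ (n + 3) * n) := by
      exact_mod_cast hk
    have hn2 : n ≤ 2 ^ n := Nat.le_of_lt (Nat.lt_two_pow_self)
    have hub : 2 * (2 ^ (n + 3) * n) ≤ 2 ^ (n + 3 + n + 1) := by
      calc 2 * (2 ^ (n + 3) * n) ≤ 2 * (2 ^ (n + 3) * 2 ^ n) :=
            Nat.mul_le_mul_left _ (Nat.mul_le_mul_left _ hn2)
        _ = 2 ^ (n + 3 + n + 1) := by ring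
      -- 2^(n+3)*2^n*2 = 2^(2n+4)
    have hlb : 2 ^ (n + 3 + n + 1) < 2 ^ (2 ^ (n + 3)) := by
      apply Nat.pow_lt_pow_right (by norm_num)
      have : n + 1 ≤ 2 ^ n := Nat.succ_le_of_lt (Nat.lt_two_pow_self)
      calc n + 3 + n + 1 = 2 * (n + 1) + 2 := by ring
        _ ≤ 2 * 2 ^ n + 2 := by omega
        _ < 8 * 2 ^ n := by nlinarith [Nat.one_le_two_pow (n := n)]
        _ = 2 ^ (n + 3) := by ring
    omega
  -- total integral bound
  have hGsup : (∫⁻ x, G x) ≤ 2 := by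
    have hmono : Monotone Gn := by
      intro a b hab
      intro x
      exact Set.indicator_le_indicator_of_subset
        (Set.Icc_subset_Icc (by exact_mod_cast neg_le_neg (Nat.cast_le.mpr hab)) (by exact_mod_cast hab))
        (fun y => zero_le) x
    have hsup : ∀ x, (⨆ n, Gn n x) = G x := by
      intro x
      apply le_antisymm
      · exact iSup_le fun n => Set.indicator_le_self _ _ x
      · have hx : x ∈ Set.Icc (-((⌈|x|⌉₊ : ℕ) : ℝ)) ((⌈|x|⌉₊ : ℕ) : ℝ) := by
          rw [Set.mem_Icc]
          constructor
          · linarith [Nat.le_ceil |x|, neg_abs_le x, abs_nonneg x]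
          · linarith [Nat.le_ceil |x|, le_abs_self x]
        calc G x = Gn ⌈|x|⌉₊ x := (Set.indicator_of_mem hx G).symm
          _ ≤ ⨆ n, Gn n x := le_iSup (fun n => Gn n x) _
    calc (∫⁻ x, G x) = ∫⁻ x, ⨆ n, Gn n x := by simp_rw [hsup]
      _ = ⨆ n, Φ n := lintegral_iSup hGnmeas (fun a b hab x => hmono hab x)
      _ ≤ 2 := iSup_le hΦ2
  -- conclude integrability
  constructor
  · exact ((Real.measurable_exp.comp (measurable_const.mul measurable_id)).mul
      hmeas).aestronglyMeasurable
  · rw [hasFiniteIntegral_iff_ofReal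
      (Filter.Eventually.of_forall fun x => mul_nonneg (Real.exp_nonneg _) (hpos x).le)]
    exact lt_of_le_of_lt hGsup (by norm_num)

/-- For `f ∈ L^p(ℝ,ω,A)` with `ω` satisfying `∫ ω^{-q} < ∞` and
`ω^{-q} ⋆ ω^{-q} ≤ ω^{-q}`, and `z` in the strip `ρ₁(ω) ≤ Re z ≤ ρ₂(ω)`, one has
`∫ ‖f(x)‖ e^{(Re z)x} dx < ∞`; in particular the Fourier transform
`f̂(z) = ∫ f(x) e^{zx} dx` is a well-defined element of `A`. -/
theorem stmt13 {A : Type*} [NormedRing A] [NormedAlgebra ℂ A] [CompleteSpace A]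
    (p q : ℝ) (hp : 1 < p) (hpq : 1 / p + 1 / q = 1)
    (ω : ℝ → ℝ) (hω : IsWeightR ω)
    (hint : Integrable fun x : ℝ => ω x ^ (-q))
    (hconv : ∀ x : ℝ, (∫ t : ℝ, ω t ^ (-q) * ω (x - t) ^ (-q)) ≤ ω x ^ (-q))
    (f : ℝ → A) (hfm : StronglyMeasurable f)
    (hfi : Integrable fun x => ‖f x‖ ^ p * ω x ^ p)
    (z : ℂ) (hz1 : rho1R ω ≤ z.re) (hz2 : z.re ≤ rho2R ω) :
    (Integrable fun x : ℝ => ‖f x‖ * Real.exp (z.re * x)) ∧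
    Integrable fun x : ℝ => Complex.exp (z * (x : ℂ)) • f x := by
  obtain ⟨hωmeas, hω1, hωsub⟩ := hω
  have hωpos : ∀ x, 0 < ω x := fun x => lt_of_lt_of_le one_pos (hω1 x)
  have hcj : p.HolderConjugate q := Real.holderConjugate_iff.mpr ⟨hp, by rw [← one_div, ← one_div]; exact hpq⟩
  have hq0 : 0 < q := hcj.symm.pos
  -- e^{z.re x} ≤ ω x
  have hexp : ∀ x : ℝ, Real.exp (z.re * x) ≤ ω x := by
    intro x
    have key : z.re * x ≤ Real.log (ω x) := by
      rcases lt_trichotomy x 0 with hx | hx | hx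
      · have hmem : Real.log (ω x) / x ∈ {r : ℝ | ∃ y : ℝ, y < 0 ∧ r = Real.log (ω y) / y} :=
          ⟨x, hx, rfl⟩
        have hbdd : BddAbove {r : ℝ | ∃ y : ℝ, y < 0 ∧ r = Real.log (ω y) / y} := by
          refine ⟨0, ?_⟩
          rintro r ⟨y, hy, rfl⟩
          exact div_nonpos_of_nonneg_of_nonpos (Real.log_nonneg (hω1 y)) hy.le
        have h1 : Real.log (ω x) / x ≤ z.re := le_trans (le_csSup hbdd hmem) hz1
        have := (div_le_iff_of_neg hx).mp h1
        linarith
      · subst hx; simp [Real.log_nonneg (hω1 0)]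
      · have hmem : Real.log (ω x) / x ∈ {r : ℝ | ∃ y : ℝ, 0 < y ∧ r = Real.log (ω y) / y} :=
          ⟨x, hx, rfl⟩
        have hbdd : BddBelow {r : ℝ | ∃ y : ℝ, 0 < y ∧ r = Real.log (ω y) / y} := by
          refine ⟨0, ?_⟩
          rintro r ⟨y, hy, rfl⟩
          exact div_nonneg (Real.log_nonneg (hω1 y)) hy.le
        have h1 : z.re ≤ Real.log (ω x) / x := le_trans hz2 (csInf_le hbdd hmem)
        have := (le_div_iff₀ hx).mp h1
        linarith
    calc Real.exp (z.re * x) ≤ Real.exp (Real.log (ω x)) := Real.exp_le_exp.mpr key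
      _ = ω x := Real.exp_log (hωpos x)
  -- apply the core lemma with h = ω^(-q), s = q * z.re
  have hGint : Integrable fun x => Real.exp (q * z.re * x) * ω x ^ (-q) := by
    apply aux_integrable_of_subconv (fun x => ω x ^ (-q))
    · exact hωmeas.pow_const (-q)
    · exact fun x => Real.rpow_pos_of_pos (hωpos x) _
    · exact fun x => Real.rpow_le_one_of_one_le_of_nonpos (hω1 x) (neg_nonpos.mpr hq0.le)
    · exact hint
    · exact hconv
    · intro x
      have h1 : Real.exp (q * z.re * x) = Real.exp (z.re * x) ^ q := by
        rw [← Real.exp_mul]; ring_nf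
      have h2 : Real.exp (z.re * x) ^ q ≤ ω x ^ q :=
        Real.rpow_le_rpow (Real.exp_nonneg _) (hexp x) hq0.le
      calc Real.exp (q * z.re * x) * ω x ^ (-q) ≤ ω x ^ q * ω x ^ (-q) := by
            rw [h1]
            exact mul_le_mul_of_nonneg_right h2 (Real.rpow_nonneg (hωpos x).le _)
        _ = 1 := by rw [← Real.rpow_add (hωpos x)]; simp
  -- first integrability via Young's inequality
  have hmain : Integrable fun x : ℝ => ‖f x‖ * Real.exp (z.re * x) := by
    have hB1 : Integrable fun x => (‖f x‖ * ω x) ^ p / p := by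
      refine Integrable.div_const ?_ p
      refine hfi.congr ?_
      filter_upwards with x
      rw [Real.mul_rpow (norm_nonneg _) (hωpos x).le]
    have hB2 : Integrable fun x => (Real.exp (z.re * x) * (ω x)⁻¹) ^ q / q := by
      refine Integrable.div_const ?_ q
      refine hGint.congr ?_
      filter_upwards with x
      rw [Real.mul_rpow (Real.exp_nonneg _) (inv_nonneg.mpr (hωpos x).le),
        ← Real.exp_mul, Real.inv_rpow (hωpos x).le, ← Real.rpow_neg (hωpos x).le]
      ring_nf
    refine (hB1.add hB2).mono' ?_ ?_
    · exact (hfm.norm.aestronglyMeasurable.mul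
        ((Real.continuous_exp.comp (continuous_const.mul continuous_id)).aestronglyMeasurable))
    · filter_upwards with x
      rw [Real.norm_eq_abs, abs_of_nonneg (mul_nonneg (norm_nonneg _) (Real.exp_nonneg _))]
      have hsplit : ‖f x‖ * Real.exp (z.re * x)
          = (‖f x‖ * ω x) * (Real.exp (z.re * x) * (ω x)⁻¹) := by
        rw [show (‖f x‖ * ω x) * (Real.exp (z.re * x) * (ω x)⁻¹)
            = ‖f x‖ * Real.exp (z.re * x) * (ω x * (ω x)⁻¹) from by ring,
          mul_inv_cancel₀ (hωpos x).ne', mul_one]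
      rw [hsplit]
      exact Real.young_inequality_of_nonneg
        (mul_nonneg (norm_nonneg _) (hωpos x).le)
        (mul_nonneg (Real.exp_nonneg _) (inv_nonneg.mpr (hωpos x).le)) hcj
  refine ⟨hmain, ?_⟩
  refine hmain.mono' ?_ ?_
  · exact ((Complex.continuous_exp.comp
      (continuous_const.mul Complex.continuous_ofReal)).aestronglyMeasurable.smul
      hfm.aestronglyMeasurable)
  · filter_upwards with x
    rw [norm_smul, Complex.norm_exp]
    have : (z * (x : ℂ)).re = z.re * x := by
      simp [Complex.mul_re]
    rw [this]
    exact le_of_eq (mul_comm _ _)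
end

section
/- Let 1 < q < ∞ and let ω be a weight on ℝ satisfying ∫_ℝ ω(x)^{-q} dx < ∞ and (ω^{-q} ⋆ ω^{-q})(x) ≤ ω(x)^{-q} for all x ∈ ℝ. Then for every z ∈ ℂ with ρ₁(ω) ≤ Re z ≤ ρ₂(ω) one has ∫_ℝ |e^{zx}|^q ω(x)^{-q} dx = ∫_ℝ e^{q(Re z)x} ω(x)^{-q} dx ≤ 1. -/
open scoped BigOperators
open MeasureTheory

/-- Tonelli for convolutions of nonnegative functions on `ℝ`. -/
lemma aux_tonelli_conv (G : ℝ → ENNReal) (hG : Measurable G) :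
    (∫⁻ x : ℝ, ∫⁻ t : ℝ, G t * G (x - t)) = (∫⁻ x : ℝ, G x) * (∫⁻ x : ℝ, G x) := by
  rw [lintegral_lintegral_swap]
  · have h1 : ∀ t : ℝ, (∫⁻ x : ℝ, G t * G (x - t)) = G t * ∫⁻ y : ℝ, G y := by
      intro t
      have hm : Measurable fun x : ℝ => G (x - t) := hG.comp (measurable_id.sub_const t)
      rw [lintegral_const_mul _ hm]
      congr 1
      exact lintegral_sub_right_eq_self G t
    simp_rw [h1]
    rw [lintegral_mul_const _ hG, mul_comm]
  · exact ((hG.comp measurable_snd).mul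
      (hG.comp (measurable_fst.sub measurable_snd))).aemeasurable

/-- If a measurable `f : ℝ → [0,1]` satisfies `f ⋆ f ≤ f` (with the convolutions integrable),
then `∫ f ≤ 1`. -/
lemma aux_conv_le (f : ℝ → ℝ) (hf_meas : Measurable f)
    (hf_nonneg : ∀ x, 0 ≤ f x) (hf_le_one : ∀ x, f x ≤ 1)
    (hprodint : ∀ x : ℝ, Integrable fun t : ℝ => f t * f (x - t))
    (hconv : ∀ x : ℝ, (∫ t : ℝ, f t * f (x - t)) ≤ f x) :
    (∫ x : ℝ, f x) ≤ 1 := by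
  set F : ℝ → ENNReal := fun x => ENNReal.ofReal (f x) with hF
  have hF_meas : Measurable F := ENNReal.measurable_ofReal.comp hf_meas
  have hF_le_one : ∀ x, F x ≤ 1 := fun x => ENNReal.ofReal_le_one.2 (hf_le_one x)
  have hFconv : ∀ x : ℝ, (∫⁻ t : ℝ, F t * F (x - t)) ≤ F x := by
    intro x
    have h1 : ∀ t : ℝ, F t * F (x - t) = ENNReal.ofReal (f t * f (x - t)) := by
      intro t; rw [ENNReal.ofReal_mul (hf_nonneg t)]
    simp_rw [h1]
    rw [← ofReal_integral_eq_lintegral_ofReal (hprodint x)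
      (Filter.Eventually.of_forall fun t => mul_nonneg (hf_nonneg t) (hf_nonneg _))]
    exact ENNReal.ofReal_le_ofReal (hconv x)
  -- truncations
  set S : ℕ → Set ℝ := fun n => Set.Icc (-(2 : ℝ) ^ n) ((2 : ℝ) ^ n) with hS
  set Fn : ℕ → ℝ → ENNReal := fun n => (S n).indicator F with hFn
  have hFn_meas : ∀ n, Measurable (Fn n) := fun n => hF_meas.indicator measurableSet_Icc
  set J : ℕ → ENNReal := fun n => ∫⁻ x : ℝ, Fn n x with hJ
  have hJ_bound : ∀ n, J n ≤ ENNReal.ofReal (2 * 2 ^ n) := by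
    intro n
    have h1 : J n = ∫⁻ x in S n, F x := lintegral_indicator measurableSet_Icc F
    have h2 : (∫⁻ x in S n, F x) ≤ ∫⁻ _ in S n, 1 :=
      lintegral_mono fun x => hF_le_one x
    have h3 : (∫⁻ _ in S n, (1 : ENNReal)) = volume (S n) := by
      simp
    have h4 : volume (S n) = ENNReal.ofReal (2 * 2 ^ n) := by
      rw [hS]; rw [Real.volume_Icc]; congr 1; ring
    rw [h1, ← h4]; exact h2.trans (le_of_eq h3)
  have hJJ : ∀ n, J n * J n ≤ J (n + 1) := by
    intro n
    have h0 : J n * J n = ∫⁻ x : ℝ, ∫⁻ t : ℝ, Fn n t * Fn n (x - t) :=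
      (aux_tonelli_conv (Fn n) (hFn_meas n)).symm
    rw [h0]
    refine lintegral_mono fun x => ?_
    by_cases hx : x ∈ S (n + 1)
    · have h1 : (∫⁻ t : ℝ, Fn n t * Fn n (x - t)) ≤ ∫⁻ t : ℝ, F t * F (x - t) :=
        lintegral_mono fun t =>
          mul_le_mul' (Set.indicator_le_self _ _ t) (Set.indicator_le_self _ _ _)
      have h2 : F x = Fn (n + 1) x := (Set.indicator_of_mem hx _).symm
      exact (h1.trans (hFconv x)).trans (le_of_eq h2)
    · have h1 : ∀ t : ℝ, Fn n t * Fn n (x - t) = 0 := by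
        intro t
        by_cases ht : t ∈ S n
        · have hxt : x - t ∉ S n := by
            intro hxt
            apply hx
            have h2 : (2 : ℝ) ^ (n + 1) = 2 ^ n + 2 ^ n := by ring
            simp only [hS, Set.mem_Icc] at ht hxt ⊢
            constructor <;> linarith [ht.1, ht.2, hxt.1, hxt.2]
          simp only [hFn]
          rw [Set.indicator_of_notMem hxt, mul_zero]
        · simp only [hFn]
          rw [Set.indicator_of_notMem ht, zero_mul]
      simp_rw [h1]
      rw [lintegral_zero]
      exact zero_le
  have hJle : ∀ n m : ℕ, J n ^ (2 ^ m) ≤ J (n + m) := by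
    intro n m
    induction m with
    | zero => simp
    | succ m ih =>
      have h1 : J n ^ 2 ^ (m + 1) = (J n ^ 2 ^ m) * (J n ^ 2 ^ m) := by
        rw [← pow_add]; congr 1; ring
      rw [h1]
      calc (J n ^ 2 ^ m) * (J n ^ 2 ^ m) ≤ J (n + m) * J (n + m) := mul_le_mul' ih ih
        _ ≤ J (n + m + 1) := hJJ (n + m)
        _ = J (n + (m + 1)) := by ring_nf
  have hJ1 : ∀ n, J n ≤ 1 := by
    intro n
    have hJfin : J n ≠ ⊤ := ne_top_of_le_ne_top ENNReal.ofReal_ne_top (hJ_bound n)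
    set r : ℝ := (J n).toReal with hr
    have hr0 : 0 ≤ r := ENNReal.toReal_nonneg
    have key : ∀ m : ℕ, r ^ (2 ^ m) ≤ 2 * 2 ^ (n + m) := by
      intro m
      have h1 : J n ^ (2 ^ m) ≤ ENNReal.ofReal (2 * 2 ^ (n + m)) :=
        (hJle n m).trans (hJ_bound (n + m))
      have h2 := ENNReal.toReal_mono ENNReal.ofReal_ne_top h1
      rw [ENNReal.toReal_pow] at h2
      rwa [ENNReal.toReal_ofReal (by positivity)] at h2
    -- conclude r ≤ 1
    have hr1 : r ≤ 1 := by
      by_contra hr1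
      push_neg at hr1
      have hlogr : 0 < Real.log r := Real.log_pos hr1
      have hm : ∀ m : ℕ, (2 : ℝ) ^ m * Real.log r ≤ ((n : ℝ) + m + 1) * Real.log 2 := by
        intro m
        have h1 : Real.log (r ^ 2 ^ m) ≤ Real.log (2 * 2 ^ (n + m)) := by
          apply Real.log_le_log (by positivity) (key m)
        rw [Real.log_pow] at h1
        rw [Real.log_mul (by norm_num) (by positivity), Real.log_pow] at h1
        push_cast at h1 ⊢
        nlinarith [h1]
      set c : ℝ := Real.log 2 / Real.log r with hc
      have hc0 : 0 < c := div_pos (Real.log_pos one_lt_two) hlogr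
      have hub : ∀ m : ℕ, (1 : ℝ) ≤ ((n : ℝ) + m + 1) * c * (1 / 2) ^ m := by
        intro m
        have h2 : (0 : ℝ) < 2 ^ m := by positivity
        have h1 := hm m
        have h3 : (2 : ℝ) ^ m ≤ ((n : ℝ) + m + 1) * c := by
          rw [hc, ← mul_div_assoc, le_div_iff₀ hlogr]
          exact h1
        have h4 : ((1 : ℝ) / 2) ^ m = ((2 : ℝ) ^ m)⁻¹ := by
          rw [one_div, inv_pow]
        rw [h4, ← div_eq_mul_inv, le_div_iff₀ h2, one_mul]
        exact h3
      have hT : Filter.Tendsto (fun m : ℕ => ((n : ℝ) + m + 1) * c * (1 / 2) ^ m)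
          Filter.atTop (nhds 0) := by
        have he : ∀ m : ℕ, ((n : ℝ) + m + 1) * c * (1 / 2) ^ m
            = c * ((n : ℝ) + 1) * (1 / 2) ^ m + c * ((m : ℝ) * (1 / 2) ^ m) := by
          intro m; ring
        simp_rw [he]
        have t1 : Filter.Tendsto (fun m : ℕ => c * ((n : ℝ) + 1) * (1 / 2 : ℝ) ^ m)
            Filter.atTop (nhds 0) := by
          have := tendsto_pow_atTop_nhds_zero_of_lt_one (by norm_num : (0:ℝ) ≤ 1/2)
            (by norm_num : (1/2 : ℝ) < 1)
          simpa using this.const_mul (c * ((n : ℝ) + 1))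
        have t2 : Filter.Tendsto (fun m : ℕ => c * ((m : ℝ) * (1 / 2 : ℝ) ^ m))
            Filter.atTop (nhds 0) := by
          have := tendsto_self_mul_const_pow_of_lt_one (by norm_num : (0:ℝ) ≤ 1/2)
            (by norm_num : (1/2 : ℝ) < 1)
          simpa using this.const_mul c
        simpa using t1.add t2
      obtain ⟨m, hm'⟩ := (hT.eventually_lt_const one_pos).exists
      exact absurd (hub m) (not_le.2 hm')
    have : J n ≤ ENNReal.ofReal 1 := by
      rw [← ENNReal.ofReal_toReal hJfin]
      exact ENNReal.ofReal_le_ofReal hr1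
    simpa using this
  -- monotone convergence
  have hmono : Monotone Fn := by
    intro i j hij x
    apply Set.indicator_le_indicator_of_subset
    · apply Set.Icc_subset_Icc
      · exact neg_le_neg (pow_le_pow_right₀ one_le_two hij)
      · exact pow_le_pow_right₀ one_le_two hij
    · exact fun a => zero_le
  have hsup : ∀ x, (⨆ n, Fn n x) = F x := by
    intro x
    apply le_antisymm
    · exact iSup_le fun n => Set.indicator_le_self _ _ x
    · obtain ⟨n, hn⟩ := exists_nat_ge |x|
      have hn2 : |x| ≤ (2 : ℝ) ^ n := by
        calc |x| ≤ (n : ℝ) := hn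
          _ ≤ (2 : ℝ) ^ n := by
            exact_mod_cast le_of_lt (Nat.lt_two_pow_self (n := n))
      have hx : x ∈ S n := by
        rw [hS]; simp only [Set.mem_Icc]
        constructor <;> [linarith [neg_abs_le x]; linarith [le_abs_self x]]
      calc F x = Fn n x := (Set.indicator_of_mem hx _).symm
        _ ≤ ⨆ n, Fn n x := le_iSup (fun n => Fn n x) n
  have hlim : (∫⁻ x : ℝ, F x) ≤ 1 := by
    have h1 : (∫⁻ x : ℝ, F x) = ⨆ n, J n := by
      rw [hJ]
      rw [← lintegral_iSup hFn_meas hmono]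
      congr 1
      funext x
      exact (hsup x).symm
    rw [h1]
    exact iSup_le hJ1
  have hfint : (∫ x : ℝ, f x) = (∫⁻ x : ℝ, F x).toReal := by
    rw [integral_eq_lintegral_of_nonneg_ae (Filter.Eventually.of_forall hf_nonneg)
      hf_meas.aestronglyMeasurable]
  rw [hfint]
  calc (∫⁻ x : ℝ, F x).toReal ≤ (1 : ENNReal).toReal :=
        ENNReal.toReal_mono ENNReal.one_ne_top hlim
    _ = 1 := by simp

/-- For a weight `ω` on `ℝ` with `∫ ω^{-q} < ∞` and `ω^{-q} ⋆ ω^{-q} ≤ ω^{-q}`, and any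
`z` with `ρ₁(ω) ≤ Re z ≤ ρ₂(ω)`, one has
`∫ |e^{zx}|^q ω(x)^{-q} dx = ∫ e^{q(Re z)x} ω(x)^{-q} dx ≤ 1`. -/
theorem stmt14 (q : ℝ) (hq : 1 < q)
    (ω : ℝ → ℝ) (hω : IsWeightR ω)
    (hint : Integrable fun x : ℝ => ω x ^ (-q))
    (hconv : ∀ x : ℝ, (∫ t : ℝ, ω t ^ (-q) * ω (x - t) ^ (-q)) ≤ ω x ^ (-q))
    (z : ℂ) (hz1 : rho1R ω ≤ z.re) (hz2 : z.re ≤ rho2R ω) :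
    (∫ x : ℝ, ‖Complex.exp (z * (x : ℂ))‖ ^ q * ω x ^ (-q)) =
      (∫ x : ℝ, Real.exp (q * z.re * x) * ω x ^ (-q)) ∧
    (∫ x : ℝ, Real.exp (q * z.re * x) * ω x ^ (-q)) ≤ 1 := by
  obtain ⟨hmeas, hone, hsub⟩ := hω
  set a := z.re with ha
  have hωpos : ∀ x, (0 : ℝ) < ω x := fun x => lt_of_lt_of_le one_pos (hone x)
  have hq0 : (0 : ℝ) ≤ q := le_of_lt (lt_trans one_pos hq)
  -- the norm computation
  have heq : ∀ x : ℝ, ‖Complex.exp (z * (x : ℂ))‖ ^ q = Real.exp (q * a * x) := by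
    intro x
    rw [Complex.norm_exp]
    have h1 : (z * (x : ℂ)).re = a * x := by
      simp [Complex.mul_re, ha]
    rw [h1, ← Real.exp_mul]
    congr 1
    ring
  have heq2 : (∫ x : ℝ, ‖Complex.exp (z * (x : ℂ))‖ ^ q * ω x ^ (-q)) =
      (∫ x : ℝ, Real.exp (q * a * x) * ω x ^ (-q)) := by
    congr 1
    funext x
    rw [heq x]
  refine ⟨heq2, ?_⟩
  -- pointwise exponential bound
  have hexp : ∀ x : ℝ, Real.exp (a * x) ≤ ω x := by
    intro x
    rcases lt_trichotomy x 0 with hx | hx | hx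
    · have hmem : Real.log (ω x) / x ∈
          {r : ℝ | ∃ y : ℝ, y < 0 ∧ r = Real.log (ω y) / y} := ⟨x, hx, rfl⟩
      have hbdd : BddAbove {r : ℝ | ∃ y : ℝ, y < 0 ∧ r = Real.log (ω y) / y} := by
        refine ⟨0, ?_⟩
        rintro r ⟨y, hy, rfl⟩
        exact div_nonpos_of_nonneg_of_nonpos (Real.log_nonneg (hone y)) hy.le
      have h1 : Real.log (ω x) / x ≤ a := (le_csSup hbdd hmem).trans hz1
      have h2 : a * x ≤ Real.log (ω x) := (div_le_iff_of_neg hx).mp h1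
      calc Real.exp (a * x) ≤ Real.exp (Real.log (ω x)) := Real.exp_le_exp.2 h2
        _ = ω x := Real.exp_log (hωpos x)
    · rw [hx]; simp [hone 0]
    · have hmem : Real.log (ω x) / x ∈
          {r : ℝ | ∃ y : ℝ, 0 < y ∧ r = Real.log (ω y) / y} := ⟨x, hx, rfl⟩
      have hbdd : BddBelow {r : ℝ | ∃ y : ℝ, 0 < y ∧ r = Real.log (ω y) / y} := by
        refine ⟨0, ?_⟩
        rintro r ⟨y, hy, rfl⟩
        exact div_nonneg (Real.log_nonneg (hone y)) hy.le
      have h1 : a ≤ Real.log (ω x) / x := hz2.trans (csInf_le hbdd hmem)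
      have h2 : a * x ≤ Real.log (ω x) := (le_div_iff₀ hx).mp h1
      calc Real.exp (a * x) ≤ Real.exp (Real.log (ω x)) := Real.exp_le_exp.2 h2
        _ = ω x := Real.exp_log (hωpos x)
  -- set up f
  set u : ℝ → ℝ := fun x => ω x ^ (-q) with hu
  have hu_meas : Measurable u := hmeas.pow measurable_const
  have hu_nonneg : ∀ x, 0 ≤ u x := fun x => Real.rpow_nonneg (hωpos x).le _
  have hu_le_one : ∀ x, u x ≤ 1 := fun x =>
    Real.rpow_le_one_of_one_le_of_nonpos (hone x) (neg_nonpos.2 hq0)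
  set f : ℝ → ℝ := fun x => Real.exp (q * a * x) * u x with hf
  have hf_meas : Measurable f := ((measurable_const.mul measurable_id).exp).mul hu_meas
  have hf_nonneg : ∀ x, 0 ≤ f x := fun x => mul_nonneg (Real.exp_pos _).le (hu_nonneg x)
  have hexpq : ∀ x : ℝ, Real.exp (q * a * x) = Real.exp (a * x) ^ q := by
    intro x
    rw [← Real.exp_mul]
    congr 1
    ring
  have hf_le_one : ∀ x, f x ≤ 1 := by
    intro x
    have h1 : Real.exp (q * a * x) ≤ ω x ^ q := by
      rw [hexpq x]
      exact Real.rpow_le_rpow (Real.exp_pos _).le (hexp x) hq0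
    calc f x ≤ ω x ^ q * ω x ^ (-q) :=
          mul_le_mul_of_nonneg_right h1 (hu_nonneg x)
      _ = ω x ^ (q + -q) := (Real.rpow_add (hωpos x) q (-q)).symm
      _ = 1 := by rw [add_neg_cancel, Real.rpow_zero]
  have hkey : ∀ x t : ℝ, f t * f (x - t) = Real.exp (q * a * x) * (u t * u (x - t)) := by
    intro x t
    have h1 : Real.exp (q * a * t) * Real.exp (q * a * (x - t)) = Real.exp (q * a * x) := by
      rw [← Real.exp_add]; congr 1; ring
    calc f t * f (x - t)
        = (Real.exp (q * a * t) * Real.exp (q * a * (x - t))) * (u t * u (x - t)) := by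
          simp only [hf]; ring
      _ = Real.exp (q * a * x) * (u t * u (x - t)) := by rw [h1]
  have huprod : ∀ x : ℝ, Integrable fun t : ℝ => u t * u (x - t) := by
    intro x
    refine Integrable.mono hint
      ((hu_meas.mul (hu_meas.comp ((measurable_const.sub measurable_id)))).aestronglyMeasurable)
      (Filter.Eventually.of_forall fun t => ?_)
    rw [Real.norm_eq_abs, Real.norm_eq_abs, abs_of_nonneg (hu_nonneg t),
      abs_of_nonneg (mul_nonneg (hu_nonneg t) (hu_nonneg _))]
    calc u t * u (x - t) ≤ u t * 1 :=
          mul_le_mul_of_nonneg_left (hu_le_one _) (hu_nonneg t)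
      _ = u t := mul_one _
  have hprodint : ∀ x : ℝ, Integrable fun t : ℝ => f t * f (x - t) := by
    intro x
    have h1 : (fun t : ℝ => f t * f (x - t)) =
        fun t : ℝ => Real.exp (q * a * x) * (u t * u (x - t)) := by
      funext t; exact hkey x t
    rw [h1]
    exact (huprod x).const_mul _
  have hfconv : ∀ x : ℝ, (∫ t : ℝ, f t * f (x - t)) ≤ f x := by
    intro x
    have h1 : (∫ t : ℝ, f t * f (x - t)) =
        Real.exp (q * a * x) * ∫ t : ℝ, u t * u (x - t) := by
      simp_rw [hkey x]
      exact integral_const_mul _ _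
    rw [h1]
    exact mul_le_mul_of_nonneg_left (hconv x) (Real.exp_pos _).le
  exact aux_conv_le f hf_meas hf_nonneg hf_le_one hprodint hfconv
end
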